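/- arXiv:2010.02779 — 10 statements merged into one kernel-verified Lean document; each statement's English description precedes it below -/
import Mathlib

section
/- For a nonzero code C ≤ Π and 1 ≤ d ≤ N, the following are equivalent: (1) srk(C) ≥ d; (2) for every tuple U = (U_1,...,U_t) of subspaces U_i ≤ F_q^{n_i} with Σ dim(U_i) ≤ d−1, the shortening C(U) = {X ∈ C : colsp(X_i) ⊆ U_i for all i} equals {0}; (3) the same holds for all U with Σ dim(U_i) = d−1. -/
/-!
A codeword `X` lies in the shortening `C(U)` exactly when its support `σ(X)` is contained in `U`,
and `srk X` is the total dimension of `σ(X)`. So a nonzero codeword of sum-rank `< d` is a nonzero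
element of the shortening at its own support, while a nonzero element of a shortening at `U` has
sum-rank at most `Σ dim Uᵢ`. Shortening is antitone in `U`, and every tuple of total dimension
`≤ d - 1` enlarges to one of total dimension exactly `d - 1` since `d - 1 ≤ N`.
-/

open Matrix Finset

/-- The sum-rank of a tuple of matrices. -/
noncomputable def srk {Fq : Type*} [Field Fq] {t : ℕ} {n m : Fin t → ℕ}
    (X : ∀ i, Matrix (Fin (n i)) (Fin (m i)) Fq) : ℕ :=
  ∑ i, (X i).rank

/-- The column space of a matrix. -/
noncomputable def colsp {Fq : Type*} [Field Fq] {a b : ℕ}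
    (X : Matrix (Fin a) (Fin b) Fq) : Submodule Fq (Fin a → Fq) :=
  LinearMap.range X.mulVecLin

theorem Finset.exists_le_le_sum_eq {ι : Type*} [Fintype ι] {f g : ι → ℕ} (hfg : f ≤ g) {s : ℕ}
    (hf : ∑ i, f i ≤ s) (hg : s ≤ ∑ i, g i) : ∃ k, f ≤ k ∧ k ≤ g ∧ ∑ i, k i = s := by
  classical
  induction s, hf using Nat.le_induction with
  | base => exact ⟨f, le_rfl, hfg, rfl⟩
  | succ s _ ih =>
    obtain ⟨k, hfk, hkg, rfl⟩ := ih (by omega)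
    obtain ⟨i, -, hi⟩ := Finset.exists_lt_of_sum_lt (by omega : ∑ j, k j < ∑ j, g j)
    refine ⟨k + Pi.single i 1, hfk.trans le_self_add, fun j => ?_, ?_⟩
    · rcases eq_or_ne j i with rfl | hj
      · simpa using hi
      · simpa [hj] using hkg j
    · simp [Finset.sum_add_distrib]

theorem Submodule.exists_le_finrank_eq {K V : Type*} [DivisionRing K] [AddCommGroup V]
    [Module K V] [FiniteDimensional K V] (W : Submodule K V) {k : ℕ}
    (hW : Module.finrank K W ≤ k) (hV : k ≤ Module.finrank K V) :
    ∃ W' : Submodule K V, W ≤ W' ∧ Module.finrank K W' = k := by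
  induction k, hW using Nat.le_induction with
  | base => exact ⟨W, le_rfl, rfl⟩
  | succ k _ ih =>
    obtain ⟨W', hWW', rfl⟩ := ih (by omega)
    obtain ⟨x, -, hx⟩ := SetLike.exists_of_lt (Submodule.lt_top_of_finrank_lt_finrank hV)
    exact ⟨W' ⊔ K ∙ x, hWW'.trans le_sup_left, finrank_sup_span_singleton hx⟩

theorem Submodule.exists_pi_le_sum_finrank_eq {K ι : Type*} [DivisionRing K] [Fintype ι]
    {V : ι → Type*} [∀ i, AddCommGroup (V i)] [∀ i, Module K (V i)]
    [∀ i, FiniteDimensional K (V i)] (U : ∀ i, Submodule K (V i)) {s : ℕ}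
    (hU : ∑ i, Module.finrank K (U i) ≤ s) (hV : s ≤ ∑ i, Module.finrank K (V i)) :
    ∃ W : ∀ i, Submodule K (V i), U ≤ W ∧ ∑ i, Module.finrank K (W i) = s := by
  obtain ⟨k, hUk, hkV, rfl⟩ :=
    Finset.exists_le_le_sum_eq (fun i => (U i).finrank_le) hU hV
  choose W hUW hW using fun i => (U i).exists_le_finrank_eq (hUk i) (hkV i)
  exact ⟨W, hUW, by simp [hW]⟩

theorem srk_eq_sum_finrank_colsp {Fq : Type*} [Field Fq] {t : ℕ} {n m : Fin t → ℕ}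
    (X : ∀ i, Matrix (Fin (n i)) (Fin (m i)) Fq) :
    srk X = ∑ i, Module.finrank Fq (colsp (X i)) :=
  rfl

theorem srk_le_sum_finrank_of_colsp_le {Fq : Type*} [Field Fq] {t : ℕ} {n m : Fin t → ℕ}
    {X : ∀ i, Matrix (Fin (n i)) (Fin (m i)) Fq} {U : ∀ i, Submodule Fq (Fin (n i) → Fq)}
    (hXU : ∀ i, colsp (X i) ≤ U i) : srk X ≤ ∑ i, Module.finrank Fq (U i) :=
  Finset.sum_le_sum fun i _ => Submodule.finrank_mono (hXU i)

theorem minDist_iff_shortenings_trivial_general (Fq : Type) [Field Fq]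
    (t : ℕ) (n m : Fin t → ℕ)
    (C : Submodule Fq (∀ i, Matrix (Fin (n i)) (Fin (m i)) Fq))
    (d : ℕ) (hd1 : 1 ≤ d) (hdN : d ≤ ∑ i, n i) :
    ((∀ X ∈ C, X ≠ 0 → d ≤ srk X) ↔
      (∀ U : ∀ i, Submodule Fq (Fin (n i) → Fq),
        (∑ i, Module.finrank Fq (U i)) ≤ d - 1 →
        ∀ X ∈ C, (∀ i, colsp (X i) ≤ U i) → X = 0)) ∧
    ((∀ U : ∀ i, Submodule Fq (Fin (n i) → Fq),
        (∑ i, Module.finrank Fq (U i)) ≤ d - 1 →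
        ∀ X ∈ C, (∀ i, colsp (X i) ≤ U i) → X = 0) ↔
      (∀ U : ∀ i, Submodule Fq (Fin (n i) → Fq),
        (∑ i, Module.finrank Fq (U i)) = d - 1 →
        ∀ X ∈ C, (∀ i, colsp (X i) ≤ U i) → X = 0)) := by
  refine ⟨⟨fun h U hU X hX hXU => ?_, fun h X hX hX0 => ?_⟩,
    ⟨fun h U hU => h U hU.le, fun h U hU X hX hXU => ?_⟩⟩
  · by_contra hX0
    have := h X hX hX0
    have := srk_le_sum_finrank_of_colsp_le hXU
    omega
  · by_contra! hlt
    refine hX0 (h (fun i => colsp (X i)) ?_ X hX fun _ => le_rfl)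
    rw [← srk_eq_sum_finrank_colsp]
    omega
  · have hN : d - 1 ≤ ∑ i, Module.finrank Fq (Fin (n i) → Fq) := by
      simp only [Module.finrank_fin_fun]
      omega
    obtain ⟨V, hUV, hV⟩ := Submodule.exists_pi_le_sum_finrank_eq U hU hN
    exact h V hV X hX fun i => (hXU i).trans (hUV i)

/-- for a nonzero linear code `C ≤ Π` and `1 ≤ d ≤ N`, the following are
equivalent: (1) `srk(C) ≥ d`; (2) the shortening `C(U)` is zero for every tuple `U` of
subspaces of total dimension at most `d - 1`; (3) the same for total dimension exactly
`d - 1`. -/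
theorem minDist_iff_shortenings_trivial (Fq : Type) [Field Fq] [Fintype Fq]
    (t : ℕ) (n m : Fin t → ℕ) (hnm : ∀ i, 1 ≤ n i ∧ n i ≤ m i)
    (C : Submodule Fq (∀ i, Matrix (Fin (n i)) (Fin (m i)) Fq)) (hC : C ≠ ⊥)
    (d : ℕ) (hd1 : 1 ≤ d) (hdN : d ≤ ∑ i, n i) :
    ((∀ X ∈ C, X ≠ 0 → d ≤ srk X) ↔
      (∀ U : ∀ i, Submodule Fq (Fin (n i) → Fq),
        (∑ i, Module.finrank Fq (U i)) ≤ d - 1 →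
        ∀ X ∈ C, (∀ i, colsp (X i) ≤ U i) → X = 0)) ∧
    ((∀ U : ∀ i, Submodule Fq (Fin (n i) → Fq),
        (∑ i, Module.finrank Fq (U i)) ≤ d - 1 →
        ∀ X ∈ C, (∀ i, colsp (X i) ≤ U i) → X = 0) ↔
      (∀ U : ∀ i, Submodule Fq (Fin (n i) → Fq),
        (∑ i, Module.finrank Fq (U i)) = d - 1 →
        ∀ X ∈ C, (∀ i, colsp (X i) ≤ U i) → X = 0)) :=
  minDist_iff_shortenings_trivial_general Fq t n m C d hd1 hdN
end

section
/- Let m = max{m_1,...,m_t} and let C ⊆ Π be a (not necessarily linear) code with |C| ≥ 2 and minimum sum-rank distance d. Then |C| ≤ A_{q^m}(N, d), the maximum cardinality of a code of length N over an alphabet of size q^m with minimum Hamming distance d. In particular |C| ≤ q^{m(N−d+1)}. -/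
open Matrix Finset

/-- `A_Q(N, d)`: the largest cardinality of a (possibly non-linear) code of length `N`
over an alphabet of size `Q` with minimum Hamming distance at least `d`, set to `1` if
no such code (of cardinality at least 2) exists. -/
noncomputable def AQ (Q N d : ℕ) : ℕ :=
  sSup ({1} ∪ {k | ∃ D : Finset (Fin N → Fin Q), D.card = k ∧ 2 ≤ k ∧
    ∀ x ∈ D, ∀ y ∈ D, x ≠ y → d ≤ hammingDist x y})

/-!
Send each row of a matrix in `Π` to a symbol of an alphabet of size `q^m`; any injection
will do, since `q^{m_i} ≤ q^m`. A tuple of matrices becomes a word of length `N`. The rank of a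
matrix is at most the number of its nonzero rows, so the sum-rank distance of two tuples is at
most the Hamming distance of their words. Hence `C` maps injectively onto a Hamming-metric code
with minimum distance at least `d`, which gives `|C| ≤ A_{q^m}(N, d)`. The Singleton bound for
that code gives the second inequality: two codewords that agree on `N - d + 1` coordinates
coincide.
-/

theorem hammingDist_comp_equiv {ι κ β : Type*} [Fintype ι] [Fintype κ] [DecidableEq β]
    (e : κ ≃ ι) (x y : ι → β) : hammingDist (x ∘ e) (y ∘ e) = hammingDist x y :=
  card_equiv e fun k => by simp

theorem hammingDist_sigma_uncurry {ι : Type*} {κ : ι → Type*} {β : ∀ i, κ i → Type*}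
    [Fintype ι] [∀ i, Fintype (κ i)] [∀ i j, DecidableEq (β i j)] (x y : ∀ i j, β i j) :
    hammingDist (Sigma.uncurry x) (Sigma.uncurry y) = ∑ i, hammingDist (x i) (y i) := by
  simp only [hammingDist]
  rw [← card_sigma]
  refine card_equiv (Equiv.refl _) fun p => ?_
  simp only [mem_filter, mem_univ, mem_sigma, true_and, Equiv.refl_apply]
  rfl

theorem card_le_pow_of_card_compl_lt {ι β : Type*} [Fintype ι] [DecidableEq ι] [Fintype β]
    [DecidableEq β] {d : ℕ} {D : Finset (ι → β)}
    (hD : ∀ x ∈ D, ∀ y ∈ D, x ≠ y → d ≤ hammingDist x y) (S : Finset ι) (hS : #Sᶜ < d) :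
    #D ≤ Fintype.card β ^ #S := by
  have hinj : Set.InjOn (fun (x : ι → β) (i : S) => x i) (D : Set (ι → β)) := by
    intro x hx y hy hxy
    by_contra hne
    have hdist : hammingDist x y ≤ #Sᶜ := card_le_card fun i hi => by
      simp only [mem_filter, mem_univ, true_and] at hi
      exact mem_compl.2 fun hiS => hi (congrFun hxy ⟨i, hiS⟩)
    exact (hdist.trans_lt hS).not_ge (hD x hx y hy hne)
  calc #D = #(D.image fun x (i : S) => x i) := (card_image_of_injOn hinj).symm
    _ ≤ Fintype.card (S → β) := card_le_univ _
    _ = Fintype.card β ^ #S := by simp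

theorem singleton_bound {ι β : Type*} [Fintype ι] [Fintype β] [DecidableEq β] {d : ℕ}
    (hd : 0 < d) (hdι : d ≤ Fintype.card ι) {D : Finset (ι → β)}
    (hD : ∀ x ∈ D, ∀ y ∈ D, x ≠ y → d ≤ hammingDist x y) :
    #D ≤ Fintype.card β ^ (Fintype.card ι - d + 1) := by
  classical
  obtain ⟨S, -, hS⟩ := exists_subset_card_eq (s := (univ : Finset ι))
    (n := Fintype.card ι - d + 1) (by rw [card_univ]; omega)
  rw [← hS]
  exact card_le_pow_of_card_compl_lt hD S (by rw [card_compl, hS]; omega)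

theorem le_AQ {Q N d : ℕ} {D : Finset (Fin N → Fin Q)} (hD₂ : 2 ≤ #D)
    (hD : ∀ x ∈ D, ∀ y ∈ D, x ≠ y → d ≤ hammingDist x y) : #D ≤ AQ Q N d := by
  refine le_csSup ⟨Fintype.card (Fin N → Fin Q) + 1, ?_⟩ (Or.inr ⟨D, rfl, hD₂, hD⟩)
  rintro k (rfl | ⟨D', rfl, -, -⟩)
  · exact Nat.le_add_left 1 _
  · exact (card_le_univ D').trans (Nat.le_succ _)

namespace Matrix

theorem rank_sub_le_hammingDist {ι κ R : Type*} [Fintype ι] [Fintype κ] [CommRing R]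
    [StrongRankCondition R] [DecidableEq (κ → R)] (A B : Matrix ι κ R) :
    (A - B).rank ≤ hammingDist A B :=
  (A - B).rank_le_card_of_support_subset _ fun i hi => by
    simpa [hammingDist] using fun h => hi (sub_eq_zero.2 h)

theorem rank_eq_zero_iff {ι κ K : Type*} [Fintype κ] [Field K] {A : Matrix ι κ K} :
    A.rank = 0 ↔ A = 0 := by
  classical
  rw [rank, Submodule.finrank_eq_zero, LinearMap.range_eq_bot, ← toLin'_apply',
    LinearEquiv.map_eq_zero_iff]

end Matrix

section SumRank

variable {K : Type*} [Field K] {t : ℕ} {n m : Fin t → ℕ}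

theorem srk_eq_zero_iff {X : ∀ i, Matrix (Fin (n i)) (Fin (m i)) K} : srk X = 0 ↔ X = 0 := by
  simp [srk, sum_eq_zero_iff, Matrix.rank_eq_zero_iff, funext_iff]

theorem srk_le_sum (X : ∀ i, Matrix (Fin (n i)) (Fin (m i)) K) : srk X ≤ ∑ i, n i :=
  sum_le_sum fun i _ => (X i).rank_le_height

theorem srk_sub_le_hammingDist [DecidableEq K] (X Y : ∀ i, Matrix (Fin (n i)) (Fin (m i)) K) :
    srk (X - Y) ≤ hammingDist (Sigma.uncurry (γ := fun i _ => Fin (m i) → K) X)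
      (Sigma.uncurry (γ := fun i _ => Fin (m i) → K) Y) := by
  refine (sum_le_sum fun i _ => (X i).rank_sub_le_hammingDist (Y i)).trans_eq ?_
  exact (hammingDist_sigma_uncurry (β := fun i _ => Fin (m i) → K) X Y).symm

variable (K) [Fintype K] (n m)

theorem exists_srk_sub_le_hammingDist :
    ∃ f : (∀ i, Matrix (Fin (n i)) (Fin (m i)) K) →
        Fin (∑ i, n i) → Fin (Fintype.card K ^ univ.sup m),
      ∀ X Y, srk (X - Y) ≤ hammingDist (f X) (f Y) := by
  classical
  have hrow i :
      Fintype.card (Fin (m i) → K) ≤ Fintype.card (Fin (Fintype.card K ^ univ.sup m)) := by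
    simpa using Nat.pow_le_pow_right Fintype.card_pos (le_sup (mem_univ i))
  let g i := (Function.Embedding.nonempty_of_card_le (hrow i)).some
  let rows (X : ∀ i, Matrix (Fin (n i)) (Fin (m i)) K) :=
    Sigma.uncurry (γ := fun i _ => Fin (m i) → K) X
  let code (X : ∀ i, Matrix (Fin (n i)) (Fin (m i)) K) (p : Σ i, Fin (n i)) := g p.1 (rows X p)
  refine ⟨fun X => code X ∘ finSigmaFinEquiv.symm, fun X Y => ?_⟩
  calc srk (X - Y) ≤ hammingDist (rows X) (rows Y) := srk_sub_le_hammingDist X Y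
    _ = hammingDist (code X) (code Y) :=
      (hammingDist_comp (fun p : Σ i, Fin (n i) => g p.1) fun p => (g p.1).injective).symm
    _ = _ := (hammingDist_comp_equiv finSigmaFinEquiv.symm (code X) (code Y)).symm

end SumRank

theorem induced_bounds_general (Fq : Type) [Field Fq] [Fintype Fq]
    (t : ℕ) (n m : Fin t → ℕ)
    (C : Finset (∀ i, Matrix (Fin (n i)) (Fin (m i)) Fq)) (hC : 2 ≤ C.card)
    (d : ℕ)
    (hd : IsLeast {e | ∃ X ∈ C, ∃ Y ∈ C, X ≠ Y ∧ srk (X - Y) = e} d) :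
    C.card ≤ AQ ((Fintype.card Fq) ^ (Finset.univ.sup m)) (∑ i, n i) d ∧
    C.card ≤ (Fintype.card Fq) ^ ((Finset.univ.sup m) * ((∑ i, n i) - d + 1)) := by
  obtain ⟨f, hf⟩ := exists_srk_sub_le_hammingDist Fq n m
  have hf_inj : Function.Injective f := fun X Y hXY => by
    simpa [hXY, srk_eq_zero_iff, sub_eq_zero] using hf X Y
  have hD_card : #(C.image f) = #C := card_image_of_injective C hf_inj
  have hD_dist : ∀ x ∈ C.image f, ∀ y ∈ C.image f, x ≠ y → d ≤ hammingDist x y := by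
    simp only [mem_image]
    rintro _ ⟨X, hX, rfl⟩ _ ⟨Y, hY, rfl⟩ hXY
    exact (hd.2 ⟨X, hX, Y, hY, ne_of_apply_ne f hXY, rfl⟩).trans (hf X Y)
  obtain ⟨X, -, Y, -, hXY, rfl⟩ := hd.1
  refine ⟨hD_card ▸ le_AQ (hD_card ▸ hC) hD_dist, ?_⟩
  rw [pow_mul, ← hD_card]
  simpa using singleton_bound (Nat.pos_of_ne_zero (mt srk_eq_zero_iff.1 (sub_ne_zero.2 hXY)))
    (by simpa using srk_le_sum (X - Y)) hD_dist

/-- induced bounds. If `C ⊆ Π` has `|C| ≥ 2` and minimum sum-rank distance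
`d`, and `m = max_i m_i`, then `|C| ≤ A_{q^m}(N, d)`; in particular
`|C| ≤ q^{m(N - d + 1)}` (the induced Singleton bound). -/
theorem induced_bounds (Fq : Type) [Field Fq] [Fintype Fq]
    (t : ℕ) (ht : 1 ≤ t) (n m : Fin t → ℕ) (hnm : ∀ i, 1 ≤ n i ∧ n i ≤ m i)
    (C : Finset (∀ i, Matrix (Fin (n i)) (Fin (m i)) Fq)) (hC : 2 ≤ C.card)
    (d : ℕ)
    (hd : IsLeast {e | ∃ X ∈ C, ∃ Y ∈ C, X ≠ Y ∧ srk (X - Y) = e} d) :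
    C.card ≤ AQ ((Fintype.card Fq) ^ (Finset.univ.sup m)) (∑ i, n i) d ∧
    C.card ≤ (Fintype.card Fq) ^ ((Finset.univ.sup m) * ((∑ i, n i) - d + 1)) :=
  induced_bounds_general Fq t n m C hC d hd
end

section
/- Let 0 ≤ r < N and U_r = {(u_1,...,u_t) ∈ N_0^t : 0 ≤ u_i ≤ n_i, Σ u_i = r}. Let j ∈ [t] and 0 ≤ δ ≤ n_j − 1 be the unique integers with r = Σ_{i=1}^{j−1} n_i + δ. If m_1 ≥ m_2 ≥ ... ≥ m_t, then max{Σ_{i=1}^t m_i u_i : (u_1,...,u_t) ∈ U_r} = Σ_{i=1}^{j−1} m_i n_i + m_j δ. -/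
/-!
The maximum is attained by the greedy tuple that fills the heaviest slots first: `u_i = n_i` for
`i < j`, `u_j = δ`, and `u_i = 0` for `i > j`. Any other admissible `u` with the same total `r` is
beaten by an exchange argument against the threshold weight `m_j`: pointwise
`(m_i - m_j) u_i ≤ (m_i - m_j) g_i` (for `i < j` since `u_i ≤ n_i = g_i`, for `i > j` since
`m_i ≤ m_j` and `g_i = 0`), and summing, the `m_j`-terms cancel because `Σ u_i = Σ g_i`.
-/

open Finset

section Exchange

variable {ι R : Type*} [NonUnitalNonAssocSemiring R] [PartialOrder R] [IsOrderedCancelAddMonoid R]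

/-- The inequality `(m i - c) * u i ≤ (m i - c) * g i` written without subtraction. -/
theorem sum_mul_le_sum_mul_of_exchange (s : Finset ι) (m u g : ι → R) (c : R)
    (hexch : ∀ i ∈ s, m i * u i + c * g i ≤ m i * g i + c * u i)
    (hsum : ∑ i ∈ s, u i = ∑ i ∈ s, g i) :
    ∑ i ∈ s, m i * u i ≤ ∑ i ∈ s, m i * g i := by
  have h := sum_le_sum hexch
  rw [sum_add_distrib, sum_add_distrib, ← mul_sum, ← mul_sum, hsum] at h
  exact le_of_add_le_add_right h

end Exchange

section GreedyFill

variable {ι R : Type*} [LinearOrder ι]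

def greedyFill [Zero R] (n : ι → R) (j : ι) (δ : R) : ι → R :=
  fun i => if i < j then n i else if i = j then δ else 0

theorem greedyFill_le [Zero R] [Preorder R] {n : ι → R} {j : ι} {δ : R}
    (hn : ∀ i, 0 ≤ n i) (hδ : δ ≤ n j) (i : ι) : greedyFill n j δ i ≤ n i := by
  unfold greedyFill
  split_ifs with hlt heq
  · exact le_rfl
  · exact heq ▸ hδ
  · exact hn i

theorem sum_mul_greedyFill [Fintype ι] [LocallyFiniteOrderBot ι] [NonUnitalNonAssocSemiring R]
    (w n : ι → R) (j : ι) (δ : R) :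
    ∑ i, w i * greedyFill n j δ i = ∑ i ∈ Iio j, w i * n i + w j * δ := by
  have hsplit : ∀ i, w i * greedyFill n j δ i =
      (if i < j then w i * n i else 0) + (if i = j then w i * δ else 0) := by
    intro i
    unfold greedyFill
    split_ifs with hlt heq <;> simp_all
  rw [sum_congr rfl fun i _ => hsplit i, sum_add_distrib, sum_ite_eq', if_pos (mem_univ j),
    ← sum_filter, filter_gt_eq_Iio]

theorem greedyFill_exchange {m n u : ι → ℕ} (hm : Antitone m) (hu : ∀ i, u i ≤ n i)
    (j : ι) (δ : ℕ) (i : ι) :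
    m i * u i + m j * greedyFill n j δ i ≤ m i * greedyFill n j δ i + m j * u i := by
  unfold greedyFill
  split_ifs with hlt heq
  · nlinarith [hm hlt.le, hu i]
  · subst heq; rw [add_comm]
  · simpa using Nat.mul_le_mul_right (u i) (hm (not_lt.mp hlt))

end GreedyFill

theorem max_weighted_sum_general (t : ℕ) (n m : Fin t → ℕ)
    (hmono : ∀ i j : Fin t, i ≤ j → m j ≤ m i)
    (r : ℕ)
    (j : Fin t) (δ : ℕ) (hδ : δ ≤ n j - 1)
    (hrj : r = (∑ i ∈ Finset.Iio j, n i) + δ) :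
    IsGreatest {K | ∃ u : Fin t → ℕ, (∀ i, u i ≤ n i) ∧ (∑ i, u i) = r ∧
        K = ∑ i, m i * u i}
      ((∑ i ∈ Finset.Iio j, m i * n i) + m j * δ) := by
  set g := greedyFill n j δ
  have hg_sum : ∑ i, g i = r := by
    simpa [hrj] using sum_mul_greedyFill (fun _ => 1) n j δ
  have hg_val : ∑ i, m i * g i = ∑ i ∈ Iio j, m i * n i + m j * δ :=
    sum_mul_greedyFill m n j δ
  refine ⟨⟨g, greedyFill_le (fun _ => Nat.zero_le _) (hδ.trans tsub_le_self), hg_sum,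
    hg_val.symm⟩, ?_⟩
  rintro _ ⟨u, hu, hu_sum, rfl⟩
  rw [← hg_val]
  exact sum_mul_le_sum_mul_of_exchange univ m u g (m j)
    (fun i _ => greedyFill_exchange (fun _ _ h => hmono _ _ h) hu j δ i) (hu_sum.trans hg_sum.symm)

/-- maximization lemma. For `0 ≤ r < N` and `m_1 ≥ ... ≥ m_t`, the maximum
of `Σ m_i u_i` over tuples `u` with `0 ≤ u_i ≤ n_i` and `Σ u_i = r` equals
`Σ_{i<j} m_i n_i + m_j δ`, where `r = Σ_{i<j} n_i + δ` with `0 ≤ δ ≤ n_j - 1`. -/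
theorem max_weighted_sum (t : ℕ) (n m : Fin t → ℕ)
    (hn : ∀ i, 1 ≤ n i) (hm : ∀ i, 1 ≤ m i)
    (hmono : ∀ i j : Fin t, i ≤ j → m j ≤ m i)
    (r : ℕ) (hr : r < ∑ i, n i)
    (j : Fin t) (δ : ℕ) (hδ : δ ≤ n j - 1)
    (hrj : r = (∑ i ∈ Finset.Iio j, n i) + δ) :
    IsGreatest {K | ∃ u : Fin t → ℕ, (∀ i, u i ≤ n i) ∧ (∑ i, u i) = r ∧
        K = ∑ i, m i * u i}
      ((∑ i ∈ Finset.Iio j, m i * n i) + m j * δ) :=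
  max_weighted_sum_general t n m hmono r j δ hδ hrj
end

section
/- Total-Distance Bound: let C ⊆ Π be a code with |C| ≥ 2 and minimum sum-rank distance d, and let Q = Σ_{i=1}^t q^{−m_i}. Then d ≤ N + (t − |C|·Q)/(|C| − 1). In particular, if d > N − Q, then |C| ≤ (d − N + t)/(d − N + Q). -/
/-!
Fix a row ρᵢ in every block. If two codewords agree in row ρᵢ of block i, that block of their
difference has a zero row and so rank at most nᵢ - 1; hence srk (X - Y) ≤ N - #{i | Xᵢ(ρᵢ) = Yᵢ(ρᵢ)}.
Summing over ordered pairs of distinct codewords gives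
d |C| (|C| - 1) ≤ N |C| (|C| - 1) - Σᵢ #{collisions of X ↦ Xᵢ(ρᵢ) off the diagonal},
and since that map takes at most q^{mᵢ} values, Cauchy–Schwarz on its fibres shows that it has at
least |C|² / q^{mᵢ} collisions on C × C, of which |C| lie on the diagonal.
-/

open Matrix Finset

theorem Matrix.rank_le_card_sub_one_of_row_eq_zero {m n K : Type*} [Fintype m] [Fintype n]
    [DecidableEq m] [Field K] (A : Matrix m n K) {i₀ : m} (h : A i₀ = 0) :
    A.rank ≤ Fintype.card m - 1 := by
  have hspan : Submodule.span K (Set.range A)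
      = Submodule.span K (Set.range fun i : {i // i ≠ i₀} => A i) := by
    refine le_antisymm (Submodule.span_le.2 ?_) (Submodule.span_mono ?_)
    · rintro _ ⟨i, rfl⟩
      by_cases hi : i = i₀
      · simp [hi, h]
      · exact Submodule.subset_span ⟨⟨i, hi⟩, rfl⟩
    · rintro _ ⟨i, rfl⟩
      exact ⟨i, rfl⟩
  rw [rank_eq_finrank_span_row, show Set.range A.row = Set.range A from rfl, hspan]
  exact (finrank_range_le_card (R := K) fun i : {i // i ≠ i₀} => A i).trans_eq
    (by simp [Fintype.card_subtype_compl])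

namespace Finset

variable {α β : Type*} [DecidableEq β] (s : Finset α) (f : α → β)

theorem card_filter_apply_eq_eq_sum_sq [Fintype β] :
    #{p ∈ s ×ˢ s | f p.1 = f p.2} = ∑ b, #{a ∈ s | f a = b} ^ 2 := by
  rw [card_eq_sum_card_fiberwise (f := fun p => f p.1) (t := univ) (fun _ _ => mem_univ _)]
  refine sum_congr rfl fun b _ => ?_
  rw [sq, ← card_product]
  congr 1
  ext ⟨x, y⟩
  simp only [mem_filter, mem_product]
  constructor
  · rintro ⟨⟨⟨hx, hy⟩, hxy⟩, rfl⟩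
    exact ⟨⟨hx, rfl⟩, hy, hxy.symm⟩
  · rintro ⟨⟨hx, rfl⟩, hy, hxy⟩
    exact ⟨⟨⟨hx, hy⟩, hxy.symm⟩, rfl⟩

theorem card_sq_le_card_mul_card_filter_apply_eq [Fintype β] :
    #s ^ 2 ≤ Fintype.card β * #{p ∈ s ×ˢ s | f p.1 = f p.2} := by
  rw [card_filter_apply_eq_eq_sum_sq, card_eq_sum_card_fiberwise (f := f) (t := univ)
    (fun _ _ => mem_univ _)]
  exact sq_sum_le_card_mul_sum_sq

theorem card_sq_le_card_mul_card_offDiag_filter_apply_eq_add [Fintype β] [DecidableEq α] :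
    #s ^ 2 ≤ Fintype.card β * (#{p ∈ s.offDiag | f p.1 = f p.2} + #s) := by
  have hdiag : #{p ∈ s ×ˢ s | f p.1 = f p.2} = #{p ∈ s.offDiag | f p.1 = f p.2} + #s := by
    rw [← diag_union_offDiag, filter_union, card_union_of_disjoint
      ((disjoint_diag_offDiag s).mono (filter_subset _ _) (filter_subset _ _)),
      filter_true_of_mem (by simp +contextual [mem_diag]), diag_card, add_comm]
  exact hdiag ▸ card_sq_le_card_mul_card_filter_apply_eq s f

end Finset

section SumRank

variable {Fq : Type*} [Field Fq] [DecidableEq Fq] {t : ℕ} {n m : Fin t → ℕ}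

theorem srk_sub_add_card_row_eq_le (ρ : ∀ i, Fin (n i))
    (X Y : ∀ i, Matrix (Fin (n i)) (Fin (m i)) Fq) :
    srk (X - Y) + #{i | X i (ρ i) = Y i (ρ i)} ≤ ∑ i, n i := by
  rw [card_filter, srk, ← sum_add_distrib]
  refine sum_le_sum fun i _ => ?_
  split_ifs with h
  · have hrank := ((X - Y) i).rank_le_card_sub_one_of_row_eq_zero (i₀ := ρ i)
      (by ext j; simp [Matrix.sub_apply, h])
    rw [Fintype.card_fin] at hrank
    have hpos := (ρ i).pos
    omega
  · simpa using ((X - Y) i).rank_le_card_height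

theorem sum_offDiag_srk_add_sum_card_row_eq_le (ρ : ∀ i, Fin (n i))
    (C : Finset (∀ i, Matrix (Fin (n i)) (Fin (m i)) Fq)) :
    ∑ p ∈ C.offDiag, srk (p.1 - p.2) + ∑ i, #{p ∈ C.offDiag | p.1 i (ρ i) = p.2 i (ρ i)}
      ≤ (∑ i, n i) * #C.offDiag := by
  calc _ = ∑ p ∈ C.offDiag, (srk (p.1 - p.2) + #{i | p.1 i (ρ i) = p.2 i (ρ i)}) := by
        simp only [card_filter, sum_add_distrib]
        rw [sum_comm]
    _ ≤ ∑ p ∈ C.offDiag, ∑ i, n i :=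
        sum_le_sum fun p _ => srk_sub_add_card_row_eq_le ρ p.1 p.2
    _ = _ := by rw [sum_const, smul_eq_mul, mul_comm]

theorem sub_mul_card_sub_one_le [Fintype Fq] (ρ : ∀ i, Fin (n i))
    (C : Finset (∀ i, Matrix (Fin (n i)) (Fin (m i)) Fq)) (hC : C.Nonempty) {d : ℕ}
    (hd : ∀ X ∈ C, ∀ Y ∈ C, X ≠ Y → d ≤ srk (X - Y)) :
    ((d : ℚ) - ∑ i, (n i : ℚ)) * (#C - 1) ≤
      t - #C * ∑ i, ((Fintype.card Fq : ℚ) ^ m i)⁻¹ := by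
  have hlower : (d : ℚ) * #C.offDiag ≤ ∑ p ∈ C.offDiag, (srk (p.1 - p.2) : ℚ) := by
    rw [mul_comm, ← nsmul_eq_mul]
    exact card_nsmul_le_sum _ _ _ fun p hp => by
      obtain ⟨hX, hY, hXY⟩ := mem_offDiag.1 hp
      exact_mod_cast hd _ hX _ hY hXY
  have hupper : ∑ p ∈ C.offDiag, (srk (p.1 - p.2) : ℚ) +
      ∑ i, (#{p ∈ C.offDiag | p.1 i (ρ i) = p.2 i (ρ i)} : ℚ) ≤
        (∑ i, (n i : ℚ)) * #C.offDiag := by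
    exact_mod_cast sum_offDiag_srk_add_sum_card_row_eq_le ρ C
  have hcollision (i : Fin t) : (#C : ℚ) ^ 2 * ((Fintype.card Fq : ℚ) ^ m i)⁻¹ - #C ≤
      #{p ∈ C.offDiag | p.1 i (ρ i) = p.2 i (ρ i)} := by
    have h := card_sq_le_card_mul_card_offDiag_filter_apply_eq_add C fun X => X i (ρ i)
    rw [Fintype.card_fun, Fintype.card_fin] at h
    have hq : (0 : ℚ) < (Fintype.card Fq : ℚ) ^ m i := by positivity
    rw [sub_le_iff_le_add, ← div_eq_mul_inv, div_le_iff₀ hq]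
    exact_mod_cast h.trans_eq (mul_comm _ _)
  have hQ := sum_le_sum fun i (_ : i ∈ univ) => hcollision i
  rw [sum_sub_distrib, ← mul_sum, sum_const, card_univ, Fintype.card_fin, nsmul_eq_mul] at hQ
  have hD : (#C.offDiag : ℚ) = #C * (#C - 1) := by
    rw [offDiag_card, Nat.cast_sub (Nat.le_mul_self _)]
    push_cast
    ring
  have hM : (0 : ℚ) < #C := by exact_mod_cast hC.card_pos
  rw [hD] at hlower hupper
  refine le_of_mul_le_mul_left ?_ hM
  linarith

end SumRank

/-- Total-distance bound. Let `C ⊆ Π` have `|C| ≥ 2` and minimum sum-rank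
distance `d`, and let `Q = Σ q^{-m_i}`. Then `d ≤ N + (t - |C| Q)/(|C| - 1)`, and if
`d > N - Q` then `|C| ≤ (d - N + t)/(d - N + Q)`. -/
theorem total_distance_bound (Fq : Type) [Field Fq] [Fintype Fq]
    (t : ℕ) (n m : Fin t → ℕ) (hnm : ∀ i, 1 ≤ n i ∧ n i ≤ m i)
    (C : Finset (∀ i, Matrix (Fin (n i)) (Fin (m i)) Fq)) (hC : 2 ≤ C.card)
    (d : ℕ)
    (hd : IsLeast {e | ∃ X ∈ C, ∃ Y ∈ C, X ≠ Y ∧ srk (X - Y) = e} d) :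
    ((d : ℚ) ≤ (∑ i, (n i : ℚ)) +
        ((t : ℚ) - (C.card : ℚ) * ∑ i, ((Fintype.card Fq : ℚ) ^ (m i))⁻¹) /
          ((C.card : ℚ) - 1)) ∧
    ((∑ i, (n i : ℚ)) - (∑ i, ((Fintype.card Fq : ℚ) ^ (m i))⁻¹) < (d : ℚ) →
      (C.card : ℚ) ≤
        ((d : ℚ) - (∑ i, (n i : ℚ)) + (t : ℚ)) /
          ((d : ℚ) - (∑ i, (n i : ℚ)) + ∑ i, ((Fintype.card Fq : ℚ) ^ (m i))⁻¹)) := by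
  classical
  have key := sub_mul_card_sub_one_le (fun i => ⟨0, (hnm i).1⟩) C
    (card_pos.1 (by omega)) fun X hX Y hY hXY => hd.2 ⟨X, hX, Y, hY, hXY, rfl⟩
  have hC1 : (0 : ℚ) < #C - 1 := by
    have : (2 : ℚ) ≤ #C := by exact_mod_cast hC
    linarith
  refine ⟨?_, fun hdQ => ?_⟩
  · rw [← sub_le_iff_le_add', le_div_iff₀ hC1]
    exact key
  · rw [le_div_iff₀ (by linarith)]
    linarith
end

section
/- Sphere-Covering (Gilbert) Bound: for any integer 1 ≤ d ≤ N, let k be the smallest integer with q^k ≥ ⌈|Π| / V_{d−1}(Π)⌉. Then there exists an F_q-linear code C ≤ Π of dimension k and minimum sum-rank distance at least d. -/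
open Matrix Finset

/-- The Gaussian (q-)binomial coefficient, via the q-Pascal recursion. -/
def qBinom (q : ℕ) : ℕ → ℕ → ℕ
  | _, 0 => 1
  | 0, _ + 1 => 0
  | nn + 1, k + 1 => qBinom q nn k + q ^ (k + 1) * qBinom q nn (k + 1)

/-- The volume `V_r(Π)` of a sum-rank ball of radius `r`. -/
def ballVol (q : ℕ) {t : ℕ} (n m : Fin t → ℕ) (r : ℕ) : ℕ :=
  ∑ s ∈ Finset.range (r + 1),
    ∑ sv ∈ (Fintype.piFinset fun _ : Fin t => Finset.range (s + 1)).filter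
        (fun sv => (∑ i, sv i) = s),
      ∏ i, qBinom q (n i) (sv i) * ∏ jj ∈ Finset.range (sv i), (q ^ (m i) - q ^ jj)

/-!
Greedy construction: the sum-rank weight is invariant under nonzero scalars, so if the balls
of radius `d - 1` around the codewords of a linear code `C` with minimum distance `d` miss some
`x`, then `C + ⟨x⟩` still has minimum distance `d`. A code of dimension `j` has `q ^ j`
codewords, and by the minimality of `k` the `q ^ j` balls cannot cover `Π` while `j < k`.

For the ball volume, a rank-`s` matrix is a surjection onto its column space `W` followed by the
inclusion of `W`. The coordinates of such a surjection in a basis of `W` are `s` independent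
functionals, which leaves at most `∏ j < s, (q ^ m - q ^ j)` surjections onto each `W`; and since
every `s`-dimensional `W` contains `∏ j < s, (q ^ s - q ^ j)` independent `s`-tuples, there are
at most `qBinom q n s` such `W`.
-/

section GaussianBinomial

theorem prod_range_succ_pow_succ_sub {R : Type*} [CommRing R] (x : R) (a s : ℕ) :
    ∏ j ∈ range (s + 1), (x ^ (a + 1) - x ^ j) =
      (x ^ (a + 1) - 1) * (x ^ s * ∏ j ∈ range s, (x ^ a - x ^ j)) := by
  rw [prod_range_succ', prod_congr rfl fun j _ => (by ring : x ^ (a + 1) - x ^ (j + 1) =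
    x * (x ^ a - x ^ j)), prod_mul_distrib, prod_const, card_range]
  ring

theorem qBinom_mul_prod_range (R : Type*) [CommRing R] (q N s : ℕ) :
    (qBinom q N s : R) * ∏ j ∈ range s, ((q : R) ^ s - q ^ j) =
      ∏ j ∈ range s, ((q : R) ^ N - q ^ j) := by
  induction N generalizing s with
  | zero =>
    cases s with
    | zero => simp [qBinom]
    | succ s => simp [qBinom, prod_range_succ']
  | succ N ih =>
    cases s with
    | zero => simp [qBinom]
    | succ s =>
      have h := ih (s + 1)
      rw [prod_range_succ_pow_succ_sub, prod_range_succ] at h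
      simp only [qBinom, Nat.cast_add, Nat.cast_mul, Nat.cast_pow, prod_range_succ_pow_succ_sub]
      linear_combination ((q : R) ^ (s + 1) - 1) * (q : R) ^ s * ih s + (q : R) ^ (s + 1) * h

theorem cast_prod_range_pow_sub {q a s : ℕ} (hq : 1 ≤ q) (hs : s ≤ a) :
    ((∏ j ∈ range s, (q ^ a - q ^ j) : ℕ) : ℤ) = ∏ j ∈ range s, ((q : ℤ) ^ a - q ^ j) := by
  push_cast [prod_congr rfl fun j hj =>
    Nat.cast_sub (R := ℤ) (Nat.pow_le_pow_right hq ((mem_range.1 hj).le.trans hs))]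
  rfl

theorem qBinom_mul_prod_range_sub {q N s : ℕ} (hq : 1 ≤ q) (hs : s ≤ N) :
    qBinom q N s * ∏ j ∈ range s, (q ^ s - q ^ j) = ∏ j ∈ range s, (q ^ N - q ^ j) := by
  apply Nat.cast_injective (R := ℤ)
  rw [Nat.cast_mul, cast_prod_range_pow_sub hq le_rfl, cast_prod_range_pow_sub hq hs,
    qBinom_mul_prod_range]

end GaussianBinomial

section LinearAlgebra

variable {K V U : Type*} [Field K] [Fintype K]
  [AddCommGroup V] [Module K V] [Finite V] [AddCommGroup U] [Module K U] [Finite U]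

local notation "q" => Fintype.card K

theorem card_linearIndependent_eq_prod_range (s : ℕ) :
    Nat.card {f : Fin s → V // LinearIndependent K f} =
      ∏ j ∈ range s, (q ^ Module.finrank K V - q ^ j) := by
  by_cases hs : s ≤ Module.finrank K V
  · rw [card_linearIndependent hs, Fin.prod_univ_eq_prod_range (fun j => q ^ _ - q ^ j)]
  · have : IsEmpty {f : Fin s → V // LinearIndependent K f} :=
      ⟨fun f => hs (by simpa using f.2.fintype_card_le_finrank)⟩
    rw [Nat.card_of_isEmpty, eq_comm]
    exact prod_eq_zero (mem_range.2 (not_le.1 hs)) (Nat.sub_self _)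

theorem card_surjective_linearMap_le {s : ℕ} (hU : Module.finrank K U = s) :
    Nat.card {g : V →ₗ[K] U // Function.Surjective g} ≤
      ∏ j ∈ range s, (q ^ Module.finrank K V - q ^ j) := by
  have : Finite (Module.Dual K V) := Module.finite_of_finite K
  let b := Module.finBasisOfFinrankEq K U hU
  have hli (g : {g : V →ₗ[K] U // Function.Surjective g}) :
      LinearIndependent K fun j => b.coord j ∘ₗ g.1 := by
    refine Fintype.linearIndependent_iff.2 fun c hc j => ?_
    obtain ⟨x, hx⟩ := g.2 (b j)
    simpa [hx, Finsupp.single_apply] using LinearMap.congr_fun hc x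
  have hinj : Function.Injective fun g =>
      (⟨_, hli g⟩ : {f : Fin s → Module.Dual K V // LinearIndependent K f}) := by
    intro g g' h
    ext x
    refine b.ext_elem fun j => ?_
    exact LinearMap.congr_fun (congr_fun (congrArg Subtype.val h) j) x
  calc _ ≤ _ := Nat.card_le_card_of_injective _ hinj
    _ = _ := by rw [card_linearIndependent_eq_prod_range, Subspace.dual_finrank_eq]

theorem card_submodule_finrank_eq_mul_le (s : ℕ) :
    Nat.card {W : Submodule K V // Module.finrank K W = s} * ∏ j ∈ range s, (q ^ s - q ^ j) ≤
      ∏ j ∈ range s, (q ^ Module.finrank K V - q ^ j) := by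
  have : Finite (Submodule K V) := Finite.of_injective _ SetLike.coe_injective
  have : Fintype {W : Submodule K V // Module.finrank K W = s} := Fintype.ofFinite _
  let span : {f : Fin s → V // LinearIndependent K f} →
      {W : Submodule K V // Module.finrank K W = s} :=
    fun f => ⟨Submodule.span K (Set.range f.1), by simpa using finrank_span_eq_card f.2⟩
  have hfiber (W : {W : Submodule K V // Module.finrank K W = s}) :
      ∏ j ∈ range s, (q ^ s - q ^ j) ≤ Nat.card {f // span f = W} := by
    have hW := card_linearIndependent_eq_prod_range (K := K) (V := W.1) s
    rw [W.2] at hW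
    rw [← hW]
    refine Nat.card_le_card_of_injective
      (fun g => ⟨⟨W.1.subtype ∘ g.1, g.2.map' _ W.1.ker_subtype⟩, Subtype.ext ?_⟩) ?_
    · change Submodule.span K (Set.range (W.1.subtype ∘ g.1)) = W.1
      rw [Set.range_comp, ← Submodule.map_span,
        g.2.span_eq_top_of_card_eq_finrank' (by simp [W.2]), Submodule.map_top,
        Submodule.range_subtype]
    · intro g g' h
      exact Subtype.ext (funext fun j => Subtype.ext (congr_fun (congrArg (·.1.1) h) j))
  calc _ = ∑ W : {W : Submodule K V // Module.finrank K W = s},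
          ∏ j ∈ range s, (q ^ s - q ^ j) := by
        rw [sum_const, card_univ, smul_eq_mul, Nat.card_eq_fintype_card]
    _ ≤ ∑ W, Nat.card {f // span f = W} := sum_le_sum fun W _ => hfiber W
    _ = _ := by
      rw [← Nat.card_sigma, Nat.card_congr (Equiv.sigmaFiberEquiv span),
        card_linearIndependent_eq_prod_range]

theorem card_submodule_finrank_eq_le_qBinom (s : ℕ) :
    Nat.card {W : Submodule K V // Module.finrank K W = s} ≤
      qBinom q (Module.finrank K V) s := by
  by_cases hs : s ≤ Module.finrank K V
  · have hpos : 0 < ∏ j ∈ range s, (q ^ s - q ^ j) := prod_pos fun j hj =>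
      Nat.sub_pos_of_lt (Nat.pow_lt_pow_right Fintype.one_lt_card (mem_range.1 hj))
    refine le_of_mul_le_mul_right ?_ hpos
    rw [qBinom_mul_prod_range_sub Fintype.card_pos hs]
    exact card_submodule_finrank_eq_mul_le s
  · have : IsEmpty {W : Submodule K V // Module.finrank K W = s} :=
      ⟨fun W => hs (W.2 ▸ Submodule.finrank_le W.1)⟩
    simp

theorem card_linearMap_finrank_range_eq_le (s : ℕ) :
    Nat.card {f : V →ₗ[K] U // Module.finrank K (LinearMap.range f) = s} ≤
      qBinom q (Module.finrank K U) s * ∏ j ∈ range s, (q ^ Module.finrank K V - q ^ j) := by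
  have : Finite (Submodule K U) := Finite.of_injective _ SetLike.coe_injective
  have : Fintype {W : Submodule K U // Module.finrank K W = s} := Fintype.ofFinite _
  have : Finite (V →ₗ[K] U) := Module.finite_of_finite K
  let rangeOf : {f : V →ₗ[K] U // Module.finrank K (LinearMap.range f) = s} →
      {W : Submodule K U // Module.finrank K W = s} := fun f => ⟨LinearMap.range f.1, f.2⟩
  have hfiber (W : {W : Submodule K U // Module.finrank K W = s}) :
      Nat.card {f // rangeOf f = W} ≤ ∏ j ∈ range s, (q ^ Module.finrank K V - q ^ j) := by
    have : Finite (V →ₗ[K] W.1) := Module.finite_of_finite K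
    have hrange (f : {f // rangeOf f = W}) : LinearMap.range f.1.1 = W.1 :=
      congrArg Subtype.val f.2
    refine le_trans (Nat.card_le_card_of_injective
      (fun f => (⟨f.1.1.codRestrict W.1 fun x => ?_, ?_⟩ :
        {g : V →ₗ[K] W.1 // Function.Surjective g})) ?_) (card_surjective_linearMap_le W.2)
    · exact hrange f ▸ LinearMap.mem_range_self _ x
    · rintro ⟨y, hy⟩
      obtain ⟨x, rfl⟩ : y ∈ LinearMap.range f.1.1 := by rwa [hrange f]
      exact ⟨x, rfl⟩
    · intro f f' h
      exact Subtype.ext <| Subtype.ext <| LinearMap.ext fun x =>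
        congrArg Subtype.val (LinearMap.congr_fun (congrArg Subtype.val h) x)
  calc _ = ∑ W, Nat.card {f // rangeOf f = W} := by
        rw [← Nat.card_sigma, Nat.card_congr (Equiv.sigmaFiberEquiv rangeOf)]
    _ ≤ ∑ W : {W : Submodule K U // Module.finrank K W = s},
          ∏ j ∈ range s, (q ^ Module.finrank K V - q ^ j) := sum_le_sum fun W _ => hfiber W
    _ ≤ _ := by
      rw [sum_const, card_univ, smul_eq_mul, ← Nat.card_eq_fintype_card]
      exact Nat.mul_le_mul_right _ (card_submodule_finrank_eq_le_qBinom s)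

theorem card_matrix_rank_eq_le (N M s : ℕ) :
    Nat.card {A : Matrix (Fin N) (Fin M) K // A.rank = s} ≤
      qBinom q N s * ∏ j ∈ range s, (q ^ M - q ^ j) := by
  have : Finite ((Fin M → K) →ₗ[K] (Fin N → K)) := Module.finite_of_finite K
  have hinj : Function.Injective fun A : {A : Matrix (Fin N) (Fin M) K // A.rank = s} =>
      (⟨A.1.mulVecLin, A.2⟩ :
        {f : (Fin M → K) →ₗ[K] (Fin N → K) // Module.finrank K (LinearMap.range f) = s}) :=
    fun A A' h => Subtype.ext (Matrix.toLin'.injective (congrArg Subtype.val h))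
  simpa using (Nat.card_le_card_of_injective _ hinj).trans
    (card_linearMap_finrank_range_eq_le s)

end LinearAlgebra

section SumRank

variable {K : Type*} [Field K] {t : ℕ} {n m : Fin t → ℕ}

theorem srk_zero : srk (0 : ∀ i, Matrix (Fin (n i)) (Fin (m i)) K) = 0 := by
  simp [srk]

theorem srk_smul {a : K} (ha : a ≠ 0) (X : ∀ i, Matrix (Fin (n i)) (Fin (m i)) K) :
    srk (a • X) = srk X :=
  sum_congr rfl fun i _ =>
    Matrix.rank_smul_of_mem_nonZeroDivisors (X i) (mem_nonZeroDivisors_of_ne_zero ha)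

variable [Fintype K]

local notation "q" => Fintype.card K

theorem card_srk_eq_le (s : ℕ) :
    #{X : ∀ i, Matrix (Fin (n i)) (Fin (m i)) K | srk X = s} ≤
      ∑ sv ∈ (Fintype.piFinset fun _ : Fin t => Finset.range (s + 1)).filter
          (fun sv => (∑ i, sv i) = s),
        ∏ i, qBinom q (n i) (sv i) * ∏ jj ∈ Finset.range (sv i), (q ^ (m i) - q ^ jj) := by
  have hprofile : ∀ X ∈ ({X | srk X = s} : Finset (∀ i, Matrix (Fin (n i)) (Fin (m i)) K)),
      (fun i => (X i).rank) ∈ (Fintype.piFinset fun _ : Fin t => Finset.range (s + 1)).filter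
        (fun sv => (∑ i, sv i) = s) := by
    intro X hX
    rw [mem_filter_univ] at hX
    refine mem_filter.2 ⟨Fintype.mem_piFinset.2 fun i => mem_range.2 (Nat.lt_succ_of_le ?_), hX⟩
    exact hX ▸ single_le_sum (f := fun i => (X i).rank) (fun _ _ => Nat.zero_le _) (mem_univ i)
  rw [card_eq_sum_card_fiberwise hprofile]
  refine sum_le_sum fun sv _ => ?_
  calc _ ≤ #(Fintype.piFinset fun i => ({A | A.rank = sv i} :
          Finset (Matrix (Fin (n i)) (Fin (m i)) K))) :=
        card_le_card fun X hX => by simp_all [funext_iff]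
    _ = ∏ i, #({A | A.rank = sv i} : Finset (Matrix (Fin (n i)) (Fin (m i)) K)) :=
        Fintype.card_piFinset _
    _ ≤ _ := prod_le_prod' fun i _ => by
        rw [← Fintype.card_subtype, ← Nat.card_eq_fintype_card]
        exact card_matrix_rank_eq_le (n i) (m i) (sv i)

theorem card_srk_le_le_ballVol (r : ℕ) :
    #{X : ∀ i, Matrix (Fin (n i)) (Fin (m i)) K | srk X ≤ r} ≤ ballVol q n m r := by
  rw [ballVol, card_eq_sum_card_fiberwise (f := srk) (t := range (r + 1))
    fun X hX => mem_range.2 (Nat.lt_succ_of_le ((mem_filter_univ X).1 hX))]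
  exact sum_le_sum fun s _ =>
    (card_le_card (filter_subset_filter _ (subset_univ _))).trans (card_srk_eq_le s)

end SumRank

section Greedy

variable {K E : Type*} [Field K] [AddCommGroup E] [Module K E] [Fintype E] {w : E → ℕ} {d V : ℕ}

theorem exists_notMem_forall_le_weight_sub (hw0 : w 0 = 0)
    (hball : #{x | w x ≤ d - 1} ≤ V) (C : Submodule K E)
    (hC : Nat.card C * V < Fintype.card E) : ∃ x ∉ C, ∀ c ∈ C, d ≤ w (x - c) := by
  classical
  let covered : Finset E :=
    ((univ : Finset C) ×ˢ ({x | w x ≤ d - 1} : Finset E)).image fun p => (p.1 : E) + p.2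
  have hcovered : #covered < #(univ : Finset E) :=
    calc #covered ≤ Nat.card C * #{x | w x ≤ d - 1} := by
          rw [Nat.card_eq_fintype_card, ← card_univ, ← card_product]
          exact card_image_le
      _ ≤ Nat.card C * V := Nat.mul_le_mul_left _ hball
      _ < _ := hC
  obtain ⟨x, -, hx⟩ := exists_mem_notMem_of_card_lt_card hcovered
  have hfar (c : E) (hc : c ∈ C) : ¬ w (x - c) ≤ d - 1 := fun h =>
    hx (mem_image.2 ⟨(⟨c, hc⟩, x - c), by simp [h], add_sub_cancel c x⟩)
  exact ⟨x, fun hxC => hfar x hxC (by simp [hw0]), fun c hc => by have := hfar c hc; omega⟩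

theorem le_weight_of_mem_sup_span_singleton (hsmul : ∀ a : K, a ≠ 0 → ∀ x, w (a • x) = w x)
    {C : Submodule K E} (hC : ∀ y ∈ C, y ≠ 0 → d ≤ w y) {x : E}
    (hx : ∀ c ∈ C, d ≤ w (x - c)) : ∀ y ∈ C ⊔ K ∙ x, y ≠ 0 → d ≤ w y := by
  intro y hy hy0
  obtain ⟨c, hc, z, hz, rfl⟩ := Submodule.mem_sup.1 hy
  obtain ⟨a, rfl⟩ := Submodule.mem_span_singleton.1 hz
  rcases eq_or_ne a 0 with rfl | ha
  · simp only [zero_smul, add_zero] at hy0 ⊢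
    exact hC c hc hy0
  · have hxc : x - (-a⁻¹) • c = a⁻¹ • (c + a • x) := by
      rw [smul_add, smul_smul, inv_mul_cancel₀ ha, one_smul, neg_smul, sub_neg_eq_add, add_comm]
    rw [← hsmul a⁻¹ (inv_ne_zero ha), ← hxc]
    exact hx _ (C.smul_mem _ hc)

theorem exists_submodule_finrank_eq_forall_le_weight [Fintype K] (hw0 : w 0 = 0)
    (hsmul : ∀ a : K, a ≠ 0 → ∀ x, w (a • x) = w x) (hball : #{x | w x ≤ d - 1} ≤ V) {k : ℕ}
    (hk : ∀ j < k, Fintype.card K ^ j * V < Fintype.card E) :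
    ∃ C : Submodule K E, Module.finrank K C = k ∧ ∀ y ∈ C, y ≠ 0 → d ≤ w y := by
  induction k with
  | zero => exact ⟨⊥, finrank_bot K E, fun y hy hy0 => absurd ((Submodule.mem_bot K).1 hy) hy0⟩
  | succ k ih =>
    obtain ⟨C, hCk, hC⟩ := ih fun j hj => hk j (Nat.lt_succ_of_lt hj)
    have hcard : Nat.card C * V < Fintype.card E := by
      rw [Module.natCard_eq_pow_finrank (K := K), hCk, Nat.card_eq_fintype_card]
      exact hk k (Nat.lt_succ_self k)
    obtain ⟨x, hxC, hx⟩ := exists_notMem_forall_le_weight_sub hw0 hball C hcard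
    exact ⟨C ⊔ K ∙ x, by rw [Submodule.finrank_sup_span_singleton hxC, hCk],
      le_weight_of_mem_sup_span_singleton hsmul hC hx⟩

end Greedy

theorem mul_lt_of_not_div_le {a b c : ℕ} (h : ¬ (a : ℚ) / b ≤ c) : c * b < a := by
  rcases b.eq_zero_or_pos with rfl | hb
  · simp at h
  · rw [not_le, lt_div_iff₀ (by exact_mod_cast hb)] at h
    exact_mod_cast h

theorem sphere_covering_bound_general (Fq : Type) [Field Fq] [Fintype Fq]
    (t : ℕ) (n m : Fin t → ℕ)
    (d : ℕ) (k : ℕ)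
    (hk : IsLeast {k' : ℕ |
      (Fintype.card (∀ i, Matrix (Fin (n i)) (Fin (m i)) Fq) : ℚ) /
        (ballVol (Fintype.card Fq) n m (d - 1) : ℚ) ≤ (Fintype.card Fq : ℚ) ^ k'} k) :
    ∃ C : Submodule Fq (∀ i, Matrix (Fin (n i)) (Fin (m i)) Fq),
      Module.finrank Fq C = k ∧ ∀ X ∈ C, X ≠ 0 → d ≤ srk X := by
  refine exists_submodule_finrank_eq_forall_le_weight srk_zero (fun a ha X => srk_smul ha X)
    (card_srk_le_le_ballVol (d - 1)) fun j hj => mul_lt_of_not_div_le fun h => ?_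
  exact (hk.2 (by simpa using h)).not_gt hj

/-- Sphere-covering (Gilbert) bound. For `1 ≤ d ≤ N`, if `k` is the
smallest integer with `q^k ≥ |Π| / V_{d-1}(Π)`, then there exists a linear code
`C ≤ Π` of dimension `k` and minimum sum-rank distance at least `d`. -/
theorem sphere_covering_bound (Fq : Type) [Field Fq] [Fintype Fq]
    (t : ℕ) (n m : Fin t → ℕ) (hnm : ∀ i, 1 ≤ n i ∧ n i ≤ m i)
    (d : ℕ) (hd1 : 1 ≤ d) (hdN : d ≤ ∑ i, n i) (k : ℕ)
    (hk : IsLeast {k' : ℕ |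
      (Fintype.card (∀ i, Matrix (Fin (n i)) (Fin (m i)) Fq) : ℚ) /
        (ballVol (Fintype.card Fq) n m (d - 1) : ℚ) ≤ (Fintype.card Fq : ℚ) ^ k'} k) :
    ∃ C : Submodule Fq (∀ i, Matrix (Fin (n i)) (Fin (m i)) Fq),
      Module.finrank Fq C = k ∧ ∀ X ∈ C, X ≠ 0 → d ≤ srk X :=
  sphere_covering_bound_general Fq t n m d k hk
end

section
/- Corollary of the Total-Distance Bound: let m = max{m_1,...,m_t} and let C ⊆ Π be a code with |C| > q^m and minimum sum-rank distance d. Then t ≤ (N − d)·q^m·(|C| − 1)/(|C| − q^m). -/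
/-!
Double count the total distance `∑_{X, Y ∈ C} srk (X - Y)`. Every ordered pair of distinct
codewords contributes at least `d`, so the total is at least `d |C| (|C| - 1)`. On the other
hand, the rank of a block difference is at most the number of rows in which the two blocks
differ, and by Cauchy–Schwarz at least `|C|² / q^m` ordered pairs agree in any given row, since
a row of the `i`-th block takes at most `q^{m_i} ≤ q^m` values. This gives the Plotkin-type bound
`q^m d (|C| - 1) ≤ N (q^m - 1) |C|`, and the claimed inequality follows from it and `t ≤ N`.
-/

open Matrix Finset

open Classical in
theorem Matrix.rank_le_card_filter_ne_zero {F k l : Type*} [Field F] [Fintype k] [Fintype l]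
    (A : Matrix k l F) : A.rank ≤ #{r | A r ≠ 0} := by
  set P := diagonal fun r => if A r = 0 then (0 : F) else 1
  have hPA : P * A = A := by
    ext r j
    by_cases h : A r = 0
    · simp [P, h, congrFun h j]
    · simp [P, h]
  calc A.rank = (P * A).rank := by rw [hPA]
    _ ≤ P.rank := rank_mul_le_left _ _
    _ = #{r | A r ≠ 0} := by simp [P, rank_diagonal, Fintype.card_subtype]

namespace Finset

variable {α β : Type*} [Fintype β] [DecidableEq β]

theorem card_filter_eq_eq_sum_sq (s : Finset α) (f : α → β) :
    #{p ∈ s ×ˢ s | f p.1 = f p.2} = ∑ b, #{a ∈ s | f a = b} ^ 2 := by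
  rw [card_eq_sum_card_fiberwise (f := fun p => f p.1) (t := univ)
    (fun _ _ => mem_coe.2 (mem_univ _))]
  refine sum_congr rfl fun b _ => ?_
  rw [sq, ← card_product]
  congr 1
  ext ⟨x, y⟩
  simp only [mem_filter, mem_product]
  constructor
  · rintro ⟨⟨⟨hx, hy⟩, hxy⟩, rfl⟩; exact ⟨⟨hx, rfl⟩, hy, hxy.symm⟩
  · rintro ⟨⟨hx, rfl⟩, hy, hyx⟩; exact ⟨⟨⟨hx, hy⟩, hyx.symm⟩, rfl⟩

theorem sq_card_le_card_mul_card_filter_eq (s : Finset α) (f : α → β) :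
    #s ^ 2 ≤ Fintype.card β * #{p ∈ s ×ˢ s | f p.1 = f p.2} := by
  rw [card_filter_eq_eq_sum_sq, card_eq_sum_card_fiberwise (f := f) (t := univ)
    (fun _ _ => mem_coe.2 (mem_univ _))]
  exact sq_sum_le_card_mul_sum_sq

theorem mul_card_filter_ne_le {s : Finset α} (f : α → β) {Q : ℕ} (hQ : Fintype.card β ≤ Q) :
    Q * #{p ∈ s ×ˢ s | f p.1 ≠ f p.2} ≤ (Q - 1) * #s ^ 2 := by
  have hsplit := card_filter_add_card_filter_not (s := s ×ˢ s) (fun p => f p.1 = f p.2)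
  have hcoll := (sq_card_le_card_mul_card_filter_eq s f).trans (Nat.mul_le_mul_right _ hQ)
  rw [card_product, ← sq] at hsplit
  rw [Nat.sub_one_mul]
  apply Nat.le_sub_of_add_le
  calc Q * #{p ∈ s ×ˢ s | f p.1 ≠ f p.2} + #s ^ 2
      ≤ Q * #{p ∈ s ×ˢ s | f p.1 ≠ f p.2} + Q * #{p ∈ s ×ˢ s | f p.1 = f p.2} := by gcongr
    _ = Q * #s ^ 2 := by rw [← hsplit, add_comm, mul_add]

end Finset

theorem Matrix.mul_sum_rank_sub_le {F k l ι : Type*} [Field F] [Fintype F] [Fintype k] [Fintype l]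
    (S : Finset ι) (A : ι → Matrix k l F) {Q : ℕ} (hQ : Fintype.card F ^ Fintype.card l ≤ Q) :
    Q * ∑ p ∈ S ×ˢ S, (A p.1 - A p.2).rank ≤ Fintype.card k * (Q - 1) * #S ^ 2 := by
  classical
  calc Q * ∑ p ∈ S ×ˢ S, (A p.1 - A p.2).rank
      ≤ Q * ∑ p ∈ S ×ˢ S, #{r | A p.1 r ≠ A p.2 r} := by
        gcongr with p
        refine (rank_le_card_filter_ne_zero (A p.1 - A p.2)).trans_eq (congrArg card ?_)
        exact filter_congr fun r _ => sub_ne_zero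
    _ = ∑ r, Q * #{p ∈ S ×ˢ S | A p.1 r ≠ A p.2 r} := by
        rw [← mul_sum]
        congr 1
        simp only [card_eq_sum_ones, sum_filter]
        rw [Finset.sum_comm]
        congr!
    _ ≤ ∑ _r : k, (Q - 1) * #S ^ 2 :=
        sum_le_sum fun r _ => mul_card_filter_ne_le (fun X => A X r) (by simpa using hQ)
    _ = Fintype.card k * (Q - 1) * #S ^ 2 := by rw [sum_const, card_univ, smul_eq_mul, mul_assoc]

theorem Finset.mul_card_offDiag_le_sum {α : Type*} {s : Finset α} (f : α → α → ℕ) {d : ℕ}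
    (hd : ∀ x ∈ s, ∀ y ∈ s, x ≠ y → d ≤ f x y) :
    d * #s.offDiag ≤ ∑ p ∈ s ×ˢ s, f p.1 p.2 := by
  calc d * #s.offDiag = ∑ _p ∈ s.offDiag, d := by rw [sum_const, smul_eq_mul, mul_comm]
    _ ≤ ∑ p ∈ s.offDiag, f p.1 p.2 := sum_le_sum fun p hp => by
        obtain ⟨hx, hy, hxy⟩ := mem_offDiag.1 hp
        exact hd _ hx _ hy hxy
    _ ≤ ∑ p ∈ s ×ˢ s, f p.1 p.2 := sum_le_sum_of_subset fun p hp =>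
        mem_product.2 ⟨(mem_offDiag.1 hp).1, (mem_offDiag.1 hp).2.1⟩

theorem srk_plotkin_bound {Fq : Type*} [Field Fq] [Fintype Fq] {t : ℕ} {n m : Fin t → ℕ}
    (C : Finset (∀ i, Matrix (Fin (n i)) (Fin (m i)) Fq)) {d Q : ℕ}
    (hQ : ∀ i, Fintype.card Fq ^ m i ≤ Q) (hd : ∀ X ∈ C, ∀ Y ∈ C, X ≠ Y → d ≤ srk (X - Y)) :
    Q * d * (#C - 1) ≤ (∑ i, n i) * (Q - 1) * #C := by
  rcases Nat.eq_zero_or_pos #C with hC | hC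
  · simp [hC]
  refine Nat.le_of_mul_le_mul_right ?_ hC
  calc Q * d * (#C - 1) * #C = Q * (d * #C.offDiag) := by
        rw [offDiag_card, ← Nat.sub_one_mul]; ring
    _ ≤ Q * ∑ p ∈ C ×ˢ C, srk (p.1 - p.2) := by gcongr; exact mul_card_offDiag_le_sum _ hd
    _ = ∑ i, Q * ∑ p ∈ C ×ˢ C, (p.1 i - p.2 i).rank := by
        simp only [srk, Pi.sub_apply, mul_sum]; exact sum_comm
    _ ≤ ∑ i, n i * (Q - 1) * #C ^ 2 := sum_le_sum fun i _ => by
        simpa using mul_sum_rank_sub_le C (fun X => X i) (by simpa using hQ i)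
    _ = (∑ i, n i) * (Q - 1) * #C * #C := by rw [← sum_mul, ← sum_mul]; ring

/-- if `m = max_i m_i`, `C ⊆ Π` has `|C| > q^m` and minimum sum-rank
distance `d`, then `t ≤ (N - d) q^m (|C| - 1)/(|C| - q^m)`. -/
theorem length_bound (Fq : Type) [Field Fq] [Fintype Fq]
    (t : ℕ) (n m : Fin t → ℕ) (hnm : ∀ i, 1 ≤ n i ∧ n i ≤ m i)
    (C : Finset (∀ i, Matrix (Fin (n i)) (Fin (m i)) Fq))
    (hbig : (Fintype.card Fq) ^ (Finset.univ.sup m) < C.card)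
    (d : ℕ)
    (hd : IsLeast {e | ∃ X ∈ C, ∃ Y ∈ C, X ≠ Y ∧ srk (X - Y) = e} d) :
    (t : ℚ) ≤ ((∑ i, (n i : ℚ)) - (d : ℚ)) *
        (Fintype.card Fq : ℚ) ^ (Finset.univ.sup m) *
        ((C.card : ℚ) - 1) /
        ((C.card : ℚ) - (Fintype.card Fq : ℚ) ^ (Finset.univ.sup m)) := by
  have hQ : ∀ i, Fintype.card Fq ^ m i ≤ Fintype.card Fq ^ univ.sup m := fun i =>
    Nat.pow_le_pow_right Fintype.card_pos (le_sup (mem_univ i))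
  have hplotkin := srk_plotkin_bound C hQ fun X hX Y hY hXY => hd.2 ⟨X, hX, Y, hY, hXY, rfl⟩
  replace hplotkin := (Nat.cast_le (α := ℚ)).2 hplotkin
  push_cast [Nat.cast_sub (Nat.one_le_pow _ _ Fintype.card_pos),
    Nat.cast_sub (show 1 ≤ #C by omega)] at hplotkin
  have hN : (t : ℚ) ≤ ∑ i, (n i : ℚ) := by
    exact_mod_cast (show t ≤ ∑ i, n i by
      simpa using sum_le_sum (s := (univ : Finset (Fin t))) fun i _ => (hnm i).1)
  have hQC : (Fintype.card Fq : ℚ) ^ univ.sup m < #C := by exact_mod_cast hbig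
  rw [le_div_iff₀ (sub_pos.2 hQC)]
  calc (t : ℚ) * (#C - Fintype.card Fq ^ univ.sup m)
      ≤ (∑ i, (n i : ℚ)) * (#C - Fintype.card Fq ^ univ.sup m) := by gcongr
    _ = (∑ i, (n i : ℚ)) * Fintype.card Fq ^ univ.sup m * (#C - 1)
          - (∑ i, (n i : ℚ)) * (Fintype.card Fq ^ univ.sup m - 1) * #C := by ring
    _ ≤ (∑ i, (n i : ℚ)) * Fintype.card Fq ^ univ.sup m * (#C - 1)
          - Fintype.card Fq ^ univ.sup m * d * (#C - 1) := by linarith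
    _ = _ := by ring
end

section
/- Duality of shortening: let C ≤ Π be F_q-linear and U = (U_1,...,U_t) with U_i ≤ F_q^{n_i} of dimension u_i. Then |C(U)| = (|C| / q^{Σ_{i=1}^t m_i(n_i − u_i)}) · |C⊥(U⊥)|, where C(U) = {X ∈ C : colsp(X_i) ⊆ U_i for all i}, C⊥ is the trace-product dual, and U⊥ = (U_1⊥,...,U_t⊥). -/
/-! The trace product is a nondegenerate bilinear form on `Π` (`MatrixTuple`) for which
`Π(U)⊥ = Π(U⊥)`, where `Π(U)` is `MatrixTuple.colsIn U`; so
`C⊥(U⊥) = C⊥ ∩ Π(U)⊥ = (C + Π(U))⊥`. Its dimension is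
`dim Π - dim (C + Π(U)) = dim Π - dim Π(U) - dim C + dim C(U)`, and
`dim Π - dim Π(U) = Σ mᵢ (nᵢ - uᵢ)`; counting points over `F_q` gives the identity. -/

open Matrix Finset

/-- The shortening `C(U)` of a code on a tuple of subspaces `U`. -/
def shorten {Fq : Type*} [Field Fq] {t : ℕ} {n m : Fin t → ℕ}
    (C : Set (∀ i, Matrix (Fin (n i)) (Fin (m i)) Fq))
    (U : ∀ i, Submodule Fq (Fin (n i) → Fq)) :
    Set (∀ i, Matrix (Fin (n i)) (Fin (m i)) Fq) :=
  {X ∈ C | ∀ i, colsp (X i) ≤ U i}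

/-- The trace-product dual of a code. -/
def dualSet {Fq : Type*} [Field Fq] {t : ℕ} {n m : Fin t → ℕ}
    (C : Set (∀ i, Matrix (Fin (n i)) (Fin (m i)) Fq)) :
    Set (∀ i, Matrix (Fin (n i)) (Fin (m i)) Fq) :=
  {Y | ∀ X ∈ C, (∑ i, Matrix.trace (X i * (Y i)ᵀ)) = 0}

/-- The orthogonal complement with respect to the standard inner product on `Fq^n`. -/
def orthComp {Fq : Type*} [Field Fq] {a : ℕ} (U : Submodule Fq (Fin a → Fq)) :
    Submodule Fq (Fin a → Fq) where
  carrier := {v | ∀ u ∈ U, (∑ j, u j * v j) = 0}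
  add_mem' := by
    intro x y hx hy u hu
    simp only [Set.mem_setOf_eq] at hx hy
    simp only [Pi.add_apply, mul_add, Finset.sum_add_distrib, hx u hu, hy u hu, add_zero]
  zero_mem' := by
    intro u hu
    simp
  smul_mem' := by
    intro c x hx u hu
    simp only [Set.mem_setOf_eq] at hx
    simp only [Pi.smul_apply, smul_eq_mul]
    calc (∑ j, u j * (c * x j)) = c * ∑ j, u j * x j := by
          rw [Finset.mul_sum]; exact Finset.sum_congr rfl fun j _ => by ring
      _ = 0 := by rw [hx u hu, mul_zero]

open Module
open LinearMap (BilinForm)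

namespace LinearMap.BilinForm

variable {K V : Type*} [Field K] [AddCommGroup V] [Module K V]

lemma orthogonal_sup (B : BilinForm K V) (W P : Submodule K V) :
    B.orthogonal (W ⊔ P) = B.orthogonal W ⊓ B.orthogonal P := by
  refine le_antisymm (le_inf (orthogonal_le le_sup_left) (orthogonal_le le_sup_right)) ?_
  rintro y ⟨hW, hP⟩
  rw [mem_orthogonal_iff]
  intro x hx
  obtain ⟨w, hw, p, hp, rfl⟩ := Submodule.mem_sup.1 hx
  rw [map_add, LinearMap.add_apply, mem_orthogonal_iff.1 hW w hw, mem_orthogonal_iff.1 hP p hp,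
    add_zero]

variable [FiniteDimensional K V]

lemma finrank_inf_add_finrank_orthogonal_sup {B : BilinForm K V} (hB : B.Nondegenerate)
    (W P : Submodule K V) :
    finrank K ↥(W ⊓ P) + (finrank K V - finrank K P) =
      finrank K W + finrank K (B.orthogonal (W ⊔ P)) := by
  have hsup := Submodule.finrank_sup_add_finrank_inf_eq W P
  have hsupV := Submodule.finrank_le (W ⊔ P)
  have hPV := Submodule.finrank_le P
  rw [finrank_orthogonal hB]
  omega

lemma natCard_inf_mul_pow_eq {B : BilinForm K V} (hB : B.Nondegenerate)
    (W P : Submodule K V) {e : ℕ} (he : e + finrank K P = finrank K V) :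
    Nat.card ↥(W ⊓ P) * Nat.card K ^ e = Nat.card W * Nat.card (B.orthogonal (W ⊔ P)) := by
  rw [natCard_eq_pow_finrank (K := K) (V := ↥(W ⊓ P)), natCard_eq_pow_finrank (K := K) (V := W),
    natCard_eq_pow_finrank (K := K) (V := B.orthogonal (W ⊔ P)), ← pow_add, ← pow_add,
    ← finrank_inf_add_finrank_orthogonal_sup hB W P, ← he, Nat.add_sub_cancel]

end LinearMap.BilinForm

lemma mem_orthComp {F : Type*} [Field F] {a : ℕ} {U : Submodule F (Fin a → F)} {v : Fin a → F} :
    v ∈ orthComp U ↔ ∀ u ∈ U, u ⬝ᵥ v = 0 :=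
  Iff.rfl

lemma colsp_le_iff {F : Type*} [Field F] {a b : ℕ} (X : Matrix (Fin a) (Fin b) F)
    (W : Submodule F (Fin a → F)) : colsp X ≤ W ↔ ∀ j, X.col j ∈ W := by
  rw [colsp, Matrix.range_mulVecLin, Submodule.span_le, Set.range_subset_iff]
  rfl

lemma trace_mul_transpose_eq_sum_dotProduct {R : Type*} [CommSemiring R] {a b : ℕ}
    (X Y : Matrix (Fin a) (Fin b) R) : (X * Yᵀ).trace = ∑ l, X.col l ⬝ᵥ Y.col l := by
  simp only [Matrix.trace, Matrix.diag, Matrix.mul_apply, dotProduct, Matrix.col,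
    Matrix.transpose_apply]
  exact Finset.sum_comm

abbrev MatrixTuple (F : Type*) {t : ℕ} (n m : Fin t → ℕ) : Type _ :=
  ∀ i, Matrix (Fin (n i)) (Fin (m i)) F

namespace MatrixTuple

variable {F : Type*} [Field F] {t : ℕ} {n m : Fin t → ℕ}

lemma finrank_eq_sum : finrank F (MatrixTuple F n m) = ∑ i, m i * n i := by
  simp [Module.finrank_pi_fintype, Module.finrank_matrix, mul_comm]

def colsIn (U : ∀ i, Submodule F (Fin (n i) → F)) : Submodule F (MatrixTuple F n m) where
  carrier := {X | ∀ i j, (X i).col j ∈ U i}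
  add_mem' hX hY i j := (U i).add_mem (hX i j) (hY i j)
  zero_mem' i _ := (U i).zero_mem
  smul_mem' c _ hX i j := (U i).smul_mem c (hX i j)

lemma mem_colsIn {U : ∀ i, Submodule F (Fin (n i) → F)} {X : MatrixTuple F n m} :
    X ∈ colsIn U ↔ ∀ i j, (X i).col j ∈ U i := Iff.rfl

def colsInEquiv (U : ∀ i, Submodule F (Fin (n i) → F)) :
    colsIn (m := m) U ≃ₗ[F] ∀ i, Fin (m i) → U i where
  toFun X i j := ⟨(X.1 i).col j, X.2 i j⟩
  invFun Y := ⟨fun i => (Matrix.of fun j => (Y i j : Fin (n i) → F))ᵀ, fun i j => (Y i j).2⟩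
  map_add' _ _ := rfl
  map_smul' _ _ := rfl
  left_inv _ := rfl
  right_inv _ := rfl

lemma finrank_colsIn (U : ∀ i, Submodule F (Fin (n i) → F)) :
    finrank F (colsIn (m := m) U) = ∑ i, m i * finrank F (U i) := by
  simp [(colsInEquiv U).finrank_eq, Module.finrank_pi_fintype]

lemma sum_mul_sub_finrank_add_finrank_colsIn (U : ∀ i, Submodule F (Fin (n i) → F)) :
    ∑ i, m i * (n i - finrank F (U i)) + finrank F (colsIn (m := m) U) =
      finrank F (MatrixTuple F n m) := by
  rw [finrank_colsIn, finrank_eq_sum, ← Finset.sum_add_distrib]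
  refine Finset.sum_congr rfl fun i _ => ?_
  have hU : finrank F (U i) ≤ n i := by
    simpa using Submodule.finrank_le (U i)
  rw [← mul_add, Nat.sub_add_cancel hU]

variable (F n m) in
def traceForm : BilinForm F (MatrixTuple F n m) :=
  LinearMap.mk₂ F (fun X Y => ∑ i, (X i * (Y i)ᵀ).trace)
    (by simp [Matrix.add_mul, Finset.sum_add_distrib])
    (by simp [Matrix.smul_mul, Finset.mul_sum])
    (by simp [Matrix.mul_add, Finset.sum_add_distrib])
    (by simp [Matrix.mul_smul, Finset.mul_sum])

lemma traceForm_apply (X Y : MatrixTuple F n m) :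
    traceForm F n m X Y = ∑ i, (X i * (Y i)ᵀ).trace := rfl

lemma traceForm_single_left (i : Fin t) (A : Matrix (Fin (n i)) (Fin (m i)) F)
    (Y : MatrixTuple F n m) : traceForm F n m (Pi.single i A) Y = (A * (Y i)ᵀ).trace := by
  rw [traceForm_apply, Fintype.sum_eq_single i fun i' h => by simp [Pi.single_eq_of_ne h]]
  simp

lemma traceForm_single_right (i : Fin t) (A : Matrix (Fin (n i)) (Fin (m i)) F)
    (X : MatrixTuple F n m) : traceForm F n m X (Pi.single i A) = (X i * Aᵀ).trace := by
  rw [traceForm_apply, Fintype.sum_eq_single i fun i' h => by simp [Pi.single_eq_of_ne h]]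
  simp

lemma traceForm_nondegenerate : (traceForm F n m).Nondegenerate := by
  constructor
  · intro X hX
    funext i
    ext k l
    simpa [traceForm_single_right, Matrix.trace_mul_single] using hX (Pi.single i (.single k l 1))
  · intro Y hY
    funext i
    ext k l
    simpa [traceForm_single_left, Matrix.trace_single_mul] using hY (Pi.single i (.single k l 1))

lemma orthogonal_colsIn (U : ∀ i, Submodule F (Fin (n i) → F)) :
    (traceForm F n m).orthogonal (colsIn U) = colsIn fun i => orthComp (U i) := by
  ext Y
  rw [LinearMap.BilinForm.mem_orthogonal_iff, mem_colsIn]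
  constructor
  · intro hY i j
    rw [mem_orthComp]
    intro u hu
    let A : Matrix (Fin (n i)) (Fin (m i)) F := (Matrix.of (Pi.single j u))ᵀ
    have hA : A.col = Pi.single j u := rfl
    have hX : Pi.single i A ∈ colsIn (m := m) U := by
      intro i' l
      rcases eq_or_ne i' i with rfl | hi
      · rw [Pi.single_eq_same, hA]
        rcases eq_or_ne l j with rfl | hl
        · rwa [Pi.single_eq_same]
        · rw [Pi.single_eq_of_ne hl]
          exact zero_mem _
      · rw [Pi.single_eq_of_ne hi]
        exact zero_mem _
    have hYX := hY _ hX
    rwa [traceForm_single_left, trace_mul_transpose_eq_sum_dotProduct,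
      Fintype.sum_eq_single j fun l hl => by rw [hA, Pi.single_eq_of_ne hl, zero_dotProduct],
      hA, Pi.single_eq_same] at hYX
  · intro hY X hX
    rw [traceForm_apply]
    refine Finset.sum_eq_zero fun i _ => ?_
    rw [trace_mul_transpose_eq_sum_dotProduct]
    exact Finset.sum_eq_zero fun j _ => hY i j _ (hX i j)

lemma shorten_coe (C : Submodule F (MatrixTuple F n m)) (U : ∀ i, Submodule F (Fin (n i) → F)) :
    shorten (C : Set (MatrixTuple F n m)) U = ↑(C ⊓ colsIn U) := by
  ext X
  simp [shorten, mem_colsIn, colsp_le_iff]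

lemma dualSet_coe (C : Submodule F (MatrixTuple F n m)) :
    dualSet (C : Set (MatrixTuple F n m)) = ↑((traceForm F n m).orthogonal C) :=
  rfl

end MatrixTuple

theorem shortening_duality_general (Fq : Type) [Field Fq] [Fintype Fq]
    (t : ℕ) (n m : Fin t → ℕ)
    (C : Submodule Fq (∀ i, Matrix (Fin (n i)) (Fin (m i)) Fq))
    (U : ∀ i, Submodule Fq (Fin (n i) → Fq)) :
    Nat.card ↥(shorten (C : Set (∀ i, Matrix (Fin (n i)) (Fin (m i)) Fq)) U) *
      (Fintype.card Fq) ^ (∑ i, m i * (n i - Module.finrank Fq (U i))) =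
    Nat.card ↥(C : Set (∀ i, Matrix (Fin (n i)) (Fin (m i)) Fq)) *
      Nat.card ↥(shorten
        (dualSet (C : Set (∀ i, Matrix (Fin (n i)) (Fin (m i)) Fq)))
        (fun i => orthComp (U i))) := by
  have hdual : shorten (dualSet (C : Set (MatrixTuple Fq n m))) (fun i => orthComp (U i)) =
      ↑((MatrixTuple.traceForm Fq n m).orthogonal (C ⊔ MatrixTuple.colsIn U)) := by
    rw [MatrixTuple.dualSet_coe, MatrixTuple.shorten_coe, LinearMap.BilinForm.orthogonal_sup,
      MatrixTuple.orthogonal_colsIn]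
  rw [MatrixTuple.shorten_coe, hdual, SetLike.coe_sort_coe, SetLike.coe_sort_coe,
    SetLike.coe_sort_coe, ← Nat.card_eq_fintype_card]
  exact LinearMap.BilinForm.natCard_inf_mul_pow_eq MatrixTuple.traceForm_nondegenerate _ _
    (MatrixTuple.sum_mul_sub_finrank_add_finrank_colsIn U)

/-- duality of shortening:
`|C(U)| ⋅ q^{Σ m_i (n_i - u_i)} = |C| ⋅ |C^⊥(U^⊥)|`. -/
theorem shortening_duality (Fq : Type) [Field Fq] [Fintype Fq]
    (t : ℕ) (n m : Fin t → ℕ) (hnm : ∀ i, 1 ≤ n i ∧ n i ≤ m i)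
    (C : Submodule Fq (∀ i, Matrix (Fin (n i)) (Fin (m i)) Fq))
    (U : ∀ i, Submodule Fq (Fin (n i) → Fq)) :
    Nat.card ↥(shorten (C : Set (∀ i, Matrix (Fin (n i)) (Fin (m i)) Fq)) U) *
      (Fintype.card Fq) ^ (∑ i, m i * (n i - Module.finrank Fq (U i))) =
    Nat.card ↥(C : Set (∀ i, Matrix (Fin (n i)) (Fin (m i)) Fq)) *
      Nat.card ↥(shorten
        (dualSet (C : Set (∀ i, Matrix (Fin (n i)) (Fin (m i)) Fq)))
        (fun i => orthComp (U i))) :=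
  shortening_duality_general Fq t n m C U
end

section
/- If m_1 = ... = m_t = m and C ≤ Π is an F_q-linear MSRD code (i.e. dim C = m(N − d + 1) where d = srk(C)), then C⊥ is also MSRD; moreover, if C is non-trivial then srk(C⊥) = N − srk(C) + 2. -/
open Matrix Finset

/-- The minimum sum-rank distance of a code (the minimum sum-rank weight of a nonzero
codeword). -/
noncomputable def minSrk {Fq : Type*} [Field Fq] {t : ℕ} {n m : Fin t → ℕ}
    (C : Set (∀ i, Matrix (Fin (n i)) (Fin (m i)) Fq)) : ℕ :=
  sInf {r | ∃ X ∈ C, X ≠ 0 ∧ srk X = r}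

/-- A code in `⊕_i Fq^{n_i × m}` (all blocks with `m` columns) is MSRD if its
cardinality is `1` or attains the Singleton bound `q^{m(N - d + 1)}`. -/
def IsMSRD {Fq : Type*} [Field Fq] [Fintype Fq] {t : ℕ} {n : Fin t → ℕ} {m : ℕ}
    (C : Set (∀ i, Matrix (Fin (n i)) (Fin ((fun _ => m) i)) Fq)) : Prop :=
  Nat.card ↥C = 1 ∨
    Nat.card ↥C = (Fintype.card Fq) ^ (m * ((∑ i, n i) - minSrk C + 1))

/-!
Write `Π(U)` (`colsIn U`) for the tuples whose `i`-th block has all its columns in a subspace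
`U i` of `F_q^{n_i}`. Then `dim Π(U) = m Σ dim U_i`, `Π(U)⊥ = Π(U⊥)`, and a code has minimum
sum-rank distance `> u` iff it meets every `Π(U)` with `Σ dim U_i = u` trivially; this already
gives the Singleton bound. If `C` is MSRD of distance `d`, then `dim C⊥ = m(d - 1)`, and for
`Σ dim U_i = N - d + 1` shortening duality gives `dim (C⊥ ⊓ Π(U)) = dim (C ⊓ Π(U⊥)) = 0`, since
`Σ dim U_i⊥ = d - 1 < d`. Hence `C⊥` has distance at least `N - d + 2`, and the Singleton bound
for `C⊥` forces equality, which makes `C⊥` MSRD.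
-/

open Module LinearMap.BilinForm

namespace Submodule

variable {K ι : Type*} [DivisionRing K] [Fintype ι] {V : ι → Type*} [∀ i, AddCommGroup (V i)]
  [∀ i, Module K (V i)] [∀ i, FiniteDimensional K (V i)]

theorem exists_le_sum_finrank_eq_add_one (W : ∀ i, Submodule K (V i))
    (h : ∑ i, finrank K (W i) < ∑ i, finrank K (V i)) :
    ∃ W', W ≤ W' ∧ ∑ i, finrank K (W' i) = ∑ i, finrank K (W i) + 1 := by
  classical
  obtain ⟨i, -, hi⟩ := Finset.exists_lt_of_sum_lt h
  obtain ⟨v, -, hv⟩ := SetLike.exists_of_lt (lt_top_of_finrank_lt_finrank hi)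
  refine ⟨Function.update W i (W i ⊔ K ∙ v), ?_, ?_⟩
  · exact le_update_iff.2 ⟨le_sup_left, fun _ _ => le_rfl⟩
  · have hsum (f : ∀ i, Submodule K (V i)) :
        ∑ j, finrank K (f j) = finrank K (f i) + ∑ j ∈ univ \ {i}, finrank K (f j) :=
      sum_eq_add_sum_sdiff_singleton_of_mem (mem_univ i) _
    rw [hsum, hsum W, Function.update_self, finrank_sup_span_singleton hv, add_right_comm]
    congr 2
    exact sum_congr rfl fun j hj => by
      rw [Function.update_of_ne (by simpa using hj)]

theorem exists_le_sum_finrank_eq (W : ∀ i, Submodule K (V i)) {u : ℕ}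
    (h₁ : ∑ i, finrank K (W i) ≤ u) (h₂ : u ≤ ∑ i, finrank K (V i)) :
    ∃ U, W ≤ U ∧ ∑ i, finrank K (U i) = u := by
  induction u, h₁ using Nat.le_induction with
  | base => exact ⟨W, le_rfl, rfl⟩
  | succ u _ ih =>
    obtain ⟨U, hWU, hU⟩ := ih (by omega)
    obtain ⟨U', hUU', hU'⟩ := exists_le_sum_finrank_eq_add_one U (by omega)
    exact ⟨U', hWU.trans hUU', by omega⟩

end Submodule

namespace LinearMap.BilinForm

theorem orthogonal_sup_s13 {R M : Type*} [CommSemiring R] [AddCommMonoid M]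
    [Module R M] {B : LinearMap.BilinForm R M} (P Q : Submodule R M) :
    B.orthogonal (P ⊔ Q) = B.orthogonal P ⊓ B.orthogonal Q := by
  refine le_antisymm (le_inf (orthogonal_le le_sup_left) (orthogonal_le le_sup_right)) ?_
  rintro y ⟨hP, hQ⟩ x hx
  obtain ⟨p, hp, q, hq, rfl⟩ := Submodule.mem_sup.1 hx
  rw [map_add, LinearMap.add_apply, hP p hp, hQ q hq, add_zero]

variable {K V : Type*} [Field K] [AddCommGroup V] [Module K V] [FiniteDimensional K V]
  {B : LinearMap.BilinForm K V}

/-- The shortening duality `|C⊥(U)| = |C⊥| |C(U⊥)| / q^{m(N-u)}` in dimension form, with an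
arbitrary subspace `S` in the role of the matrices with columns in `U`. -/
theorem finrank_orthogonal_inf_add (hB : B.Nondegenerate) (hB' : B.IsRefl)
    (C S : Submodule K V) :
    finrank K ↥(B.orthogonal C ⊓ S) + finrank K V =
      finrank K (B.orthogonal C) + finrank K S + finrank K ↥(C ⊓ B.orthogonal S) := by
  have hsup := Submodule.finrank_sup_add_finrank_inf_eq (B.orthogonal C) S
  have hperp := finrank_orthogonal hB (B.orthogonal C ⊔ S)
  rw [orthogonal_sup_s13, orthogonal_orthogonal hB hB'] at hperp
  have := Submodule.finrank_le (B.orthogonal C ⊔ S)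
  omega

end LinearMap.BilinForm

section DotProduct

variable {R ι : Type*} [CommRing R] [Fintype ι]

theorem dotProductBilin_isSymm :
    LinearMap.BilinForm.IsSymm (dotProductBilin R R : LinearMap.BilinForm R (ι → R)) :=
  ⟨dotProduct_comm⟩

theorem dotProductBilin_nondegenerate :
    LinearMap.BilinForm.Nondegenerate (dotProductBilin R R : LinearMap.BilinForm R (ι → R)) :=
  (LinearMap.IsRefl.nondegenerate_iff_separatingLeft
    (B := (dotProductBilin R R : LinearMap.BilinForm R (ι → R)))
    dotProductBilin_isSymm.isRefl).2 dotProduct_eq_zero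

end DotProduct

namespace SumRank

abbrev MatTuple (K : Type*) {t : ℕ} (n m : Fin t → ℕ) :=
  ∀ i, Matrix (Fin (n i)) (Fin (m i)) K

variable {K : Type*} [Field K] {t : ℕ} {n m : Fin t → ℕ}

def traceForm : LinearMap.BilinForm K (MatTuple K n m) :=
  LinearMap.mk₂ K (fun X Y => ∑ i, trace (X i * (Y i)ᵀ))
    (fun X X' Y => by simp [Matrix.add_mul, sum_add_distrib])
    (fun c X Y => by simp [mul_sum])
    (fun X Y Y' => by simp [Matrix.mul_add, sum_add_distrib])
    (fun c X Y => by simp [mul_sum])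

theorem dualSet_eq_orthogonal (C : Submodule K (MatTuple K n m)) :
    dualSet (C : Set (MatTuple K n m)) = traceForm.orthogonal C :=
  rfl

theorem traceForm_apply (X Y : MatTuple K n m) :
    traceForm X Y = ∑ i, ∑ j, (X i).col j ⬝ᵥ (Y i).col j := by
  rw [traceForm, LinearMap.mk₂_apply]
  exact sum_congr rfl fun i _ => (sum_hadamard_eq (X i) (Y i)).symm.trans sum_comm

theorem traceForm_isSymm : (traceForm : LinearMap.BilinForm K (MatTuple K n m)).IsSymm :=
  ⟨fun X Y => by simp only [traceForm_apply, dotProduct_comm]⟩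

def colsIn (U : ∀ i, Submodule K (Fin (n i) → K)) : Submodule K (MatTuple K n m) where
  carrier := {X | ∀ i j, (X i).col j ∈ U i}
  zero_mem' i _ := (U i).zero_mem
  add_mem' hX hY i j := (U i).add_mem (hX i j) (hY i j)
  smul_mem' c _ hX i j := (U i).smul_mem c (hX i j)

theorem colsIn_bot : colsIn (m := m) (fun i => (⊥ : Submodule K (Fin (n i) → K))) = ⊥ :=
  eq_bot_iff.2 fun _ hX => funext fun i => Matrix.ext fun k j => congrFun (hX i j) k

theorem orthogonal_colsIn (U : ∀ i, Submodule K (Fin (n i) → K)) :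
    traceForm.orthogonal (colsIn (m := m) U) =
      colsIn fun i => orthogonal (dotProductBilin K K) (U i) := by
  classical
  ext Y
  refine ⟨fun hY i j u hu => ?_, fun hY X hX => ?_⟩
  · set X : MatTuple K n m := Pi.single i (Matrix.updateRow 0 j u)ᵀ
    have hcol (j' : Fin (m i)) :
        (X i).col j' = Function.update (0 : Fin (m i) → Fin (n i) → K) j u j' := by
      simp only [X, Pi.single_eq_same, Matrix.col, Matrix.transpose_transpose]
      rfl
    have hX : X ∈ colsIn U := by
      intro i' j'
      rcases eq_or_ne i' i with rfl | hi
      · rw [hcol]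
        rcases eq_or_ne j' j with rfl | hj
        · simpa using hu
        · simp [hj]
      · rw [show X i' = 0 from Pi.single_eq_of_ne hi _]
        exact (U i').zero_mem
    have := hY X hX
    rw [traceForm_apply, sum_eq_single i, sum_eq_single j, hcol] at this
    · simpa using this
    · intro j' _ hj'
      simp [hcol, hj']
    · simp
    · intro i' _ hi'
      rw [show X i' = 0 from Pi.single_eq_of_ne hi' _]
      exact sum_eq_zero fun _ _ => zero_dotProduct _
    · simp
  · rw [traceForm_apply]
    exact sum_eq_zero fun i _ => sum_eq_zero fun j _ => hY i j _ (hX i j)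

theorem traceForm_nondegenerate :
    (traceForm : LinearMap.BilinForm K (MatTuple K n m)).Nondegenerate := by
  refine .ofSeparatingRight fun Y hY => ?_
  have hY' : Y ∈ traceForm.orthogonal (colsIn (m := m) fun i => ⊤) := fun X _ => hY X
  simp only [orthogonal_colsIn, orthogonal_top_eq_bot dotProductBilin_nondegenerate,
    colsIn_bot] at hY'
  exact (Submodule.mem_bot K).1 hY'

def colsInEquiv (U : ∀ i, Submodule K (Fin (n i) → K)) :
    colsIn (m := m) U ≃ₗ[K] ∀ i, Fin (m i) → U i where
  toFun X i j := ⟨(X.1 i).col j, X.2 i j⟩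
  map_add' _ _ := rfl
  map_smul' _ _ := rfl
  invFun f := ⟨fun i => Matrix.of fun k j => (f i j).1 k, fun i j => (f i j).2⟩
  left_inv _ := rfl
  right_inv _ := rfl

theorem finrank_colsIn (U : ∀ i, Submodule K (Fin (n i) → K)) :
    finrank K (colsIn (m := m) U) = ∑ i, m i * finrank K (U i) := by
  simp [(colsInEquiv U).finrank_eq, Module.finrank_pi_fintype]

theorem finrank_matTuple : finrank K (MatTuple K n m) = ∑ i, m i * n i := by
  simp [Module.finrank_pi_fintype, Module.finrank_matrix, mul_comm]

theorem srk_le_of_mem_colsIn {U : ∀ i, Submodule K (Fin (n i) → K)} {X : MatTuple K n m}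
    (hX : X ∈ colsIn U) : srk X ≤ ∑ i, finrank K (U i) :=
  sum_le_sum fun i _ => (Matrix.rank_eq_finrank_span_cols _).trans_le <|
    Submodule.finrank_mono <| Submodule.span_le.2 <| Set.range_subset_iff.2 (hX i)

theorem mem_colsIn_span_col (X : MatTuple K n m) :
    X ∈ colsIn fun i => Submodule.span K (Set.range (X i).col) :=
  fun _ j => Submodule.subset_span ⟨j, rfl⟩

theorem srk_eq_sum_finrank_span_col (X : MatTuple K n m) :
    srk X = ∑ i, finrank K (Submodule.span K (Set.range (X i).col)) :=
  sum_congr rfl fun _ _ => Matrix.rank_eq_finrank_span_cols _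

theorem srk_le_sum (X : MatTuple K n m) : srk X ≤ ∑ i, n i :=
  sum_le_sum fun _ _ => Matrix.rank_le_height _

theorem srk_pos {X : MatTuple K n m} (hX : X ≠ 0) : 0 < srk X := by
  refine Nat.pos_of_ne_zero fun h => hX ?_
  rw [srk_eq_sum_finrank_span_col, sum_eq_zero_iff] at h
  have hcols := mem_colsIn_span_col X
  simp only [fun i => Submodule.finrank_eq_zero.1 (h i (mem_univ i)), colsIn_bot] at hcols
  exact (Submodule.mem_bot K).1 hcols

theorem minSrk_le {C : Set (MatTuple K n m)} {X : MatTuple K n m} (hX : X ∈ C) (h0 : X ≠ 0) :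
    minSrk C ≤ srk X :=
  Nat.sInf_le ⟨X, hX, h0, rfl⟩

theorem exists_srk_eq_minSrk {C : Set (MatTuple K n m)} (hC : ∃ X ∈ C, X ≠ 0) :
    ∃ X ∈ C, X ≠ 0 ∧ srk X = minSrk C :=
  let ⟨X, hX, h0⟩ := hC
  Nat.sInf_mem (s := {r | ∃ X ∈ C, X ≠ 0 ∧ srk X = r}) ⟨srk X, X, hX, h0, rfl⟩

theorem lt_minSrk_iff {C : Set (MatTuple K n m)} (hC : ∃ X ∈ C, X ≠ 0) {u : ℕ} :
    u < minSrk C ↔ ∀ X ∈ C, X ≠ 0 → u < srk X := by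
  refine ⟨fun h X hX h0 => h.trans_le (minSrk_le hX h0), fun h => ?_⟩
  obtain ⟨X, hX, h0, hXd⟩ := exists_srk_eq_minSrk hC
  exact hXd ▸ h X hX h0

theorem minSrk_pos {C : Set (MatTuple K n m)} (hC : ∃ X ∈ C, X ≠ 0) : 0 < minSrk C :=
  (lt_minSrk_iff hC).2 fun _ _ => srk_pos

theorem minSrk_le_sum {C : Set (MatTuple K n m)} (hC : ∃ X ∈ C, X ≠ 0) :
    minSrk C ≤ ∑ i, n i :=
  let ⟨X, hX, h0⟩ := hC
  (minSrk_le hX h0).trans (srk_le_sum X)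

/-- A nonzero codeword of sum-rank at most `u` lies in `colsIn U` for its column spaces `U`,
enlarged to total dimension `u`. -/
theorem forall_lt_srk_iff (C : Submodule K (MatTuple K n m)) {u : ℕ} (hu : u ≤ ∑ i, n i) :
    (∀ X ∈ C, X ≠ 0 → u < srk X) ↔
      ∀ U : ∀ i, Submodule K (Fin (n i) → K),
        ∑ i, finrank K (U i) = u → C ⊓ colsIn U = ⊥ := by
  refine ⟨fun h U hU => (Submodule.eq_bot_iff _).2 fun X ⟨hXC, hXU⟩ => ?_,
    fun h X hXC h0 => ?_⟩
  · by_contra h0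
    exact (h X hXC h0).not_ge (hU ▸ srk_le_of_mem_colsIn hXU)
  · by_contra! hXu
    obtain ⟨U, hle, hU⟩ := Submodule.exists_le_sum_finrank_eq
      (fun i => Submodule.span K (Set.range (X i).col)) (srk_eq_sum_finrank_span_col X ▸ hXu)
      (by simpa using hu)
    have hX : X ∈ C ⊓ colsIn U := ⟨hXC, fun i j => hle i (mem_colsIn_span_col X i j)⟩
    exact h0 ((Submodule.mem_bot K).1 (h U hU ▸ hX))

theorem sum_finrank_add_sum_finrank_orthogonal (U : ∀ i, Submodule K (Fin (n i) → K)) :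
    ∑ i, finrank K (U i) + ∑ i, finrank K (orthogonal (dotProductBilin K K) (U i)) =
      ∑ i, n i := by
  rw [← sum_add_distrib]
  refine sum_congr rfl fun i _ => ?_
  rw [finrank_add_finrank_orthogonal dotProductBilin_isSymm.isRefl,
    orthogonal_top_eq_bot dotProductBilin_nondegenerate, inf_bot_eq, finrank_bot,
    Module.finrank_fin_fun, add_zero]

theorem orthogonal_eq_bot_iff {C : Submodule K (MatTuple K n m)} :
    traceForm.orthogonal C = ⊥ ↔ C = ⊤ := by
  refine ⟨fun h => ?_, fun h => h ▸ orthogonal_top_eq_bot traceForm_nondegenerate⟩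
  rw [← orthogonal_orthogonal traceForm_nondegenerate traceForm_isSymm.isRefl C, h,
    orthogonal_bot]

section ConstantWidth

variable {m : ℕ}

theorem finrank_matTuple_const : finrank K (MatTuple K n fun _ => m) = m * ∑ i, n i := by
  rw [finrank_matTuple, mul_sum]

theorem finrank_le_singleton (C : Submodule K (MatTuple K n fun _ => m)) (hC : C ≠ ⊥) :
    finrank K C ≤ m * (∑ i, n i - minSrk (C : Set (MatTuple K n fun _ => m)) + 1) := by
  set d := minSrk (C : Set (MatTuple K n fun _ => m))
  have hne := (Submodule.ne_bot_iff C).1 hC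
  have hd := minSrk_pos hne
  have hdN := minSrk_le_sum hne
  obtain ⟨U, -, hU⟩ := Submodule.exists_le_sum_finrank_eq
    (fun i => (⊥ : Submodule K (Fin (n i) → K))) (u := d - 1) (by simp) (by simp; omega)
  have hdisj : C ⊓ colsIn U = ⊥ :=
    (forall_lt_srk_iff C (by omega)).1 ((lt_minSrk_iff hne).1 (by omega)) U hU
  have h := Submodule.finrank_add_finrank_le_of_disjoint (disjoint_iff.2 hdisj)
  rw [finrank_colsIn, ← mul_sum, hU, finrank_matTuple_const] at h
  have : m * (∑ i, n i - d + 1) + m * (d - 1) = m * ∑ i, n i := by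
    rw [← mul_add]
    congr 1
    omega
  omega

variable {C : Submodule K (MatTuple K n fun _ => m)}

theorem two_le_minSrk (hbot : C ≠ ⊥) (htop : C ≠ ⊤)
    (hC : finrank K C = m * (∑ i, n i - minSrk (C : Set (MatTuple K n fun _ => m)) + 1)) :
    2 ≤ minSrk (C : Set (MatTuple K n fun _ => m)) := by
  have hne := (Submodule.ne_bot_iff C).1 hbot
  have hd := minSrk_pos hne
  have hdN := minSrk_le_sum hne
  by_contra! h
  refine htop (Submodule.eq_top_of_finrank_eq ?_)
  rw [hC, finrank_matTuple_const]
  congr 1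
  omega

theorem finrank_orthogonal_of_finrank_eq (hbot : C ≠ ⊥)
    (hC : finrank K C = m * (∑ i, n i - minSrk (C : Set (MatTuple K n fun _ => m)) + 1)) :
    finrank K (traceForm.orthogonal C) = m * (minSrk (C : Set (MatTuple K n fun _ => m)) - 1) := by
  have hne := (Submodule.ne_bot_iff C).1 hbot
  have hd := minSrk_pos hne
  have hdN := minSrk_le_sum hne
  rw [finrank_orthogonal traceForm_nondegenerate, finrank_matTuple_const, hC, ← Nat.mul_sub]
  congr 1
  omega

theorem lt_minSrk_orthogonal (hbot : C ≠ ⊥) (htop : C ≠ ⊤)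
    (hC : finrank K C = m * (∑ i, n i - minSrk (C : Set (MatTuple K n fun _ => m)) + 1)) :
    ∑ i, n i - minSrk (C : Set (MatTuple K n fun _ => m)) + 1 <
      minSrk (traceForm.orthogonal C : Set (MatTuple K n fun _ => m)) := by
  have hne := (Submodule.ne_bot_iff C).1 hbot
  have hd := minSrk_pos hne
  have hdN := minSrk_le_sum hne
  have hD := finrank_orthogonal_of_finrank_eq hbot hC
  set d := minSrk (C : Set (MatTuple K n fun _ => m))
  refine (lt_minSrk_iff ((Submodule.ne_bot_iff _).1 (orthogonal_eq_bot_iff.not.2 htop))).2 <|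
    (forall_lt_srk_iff _ (by omega)).2 fun U hU => ?_
  have hUperp := sum_finrank_add_sum_finrank_orthogonal U
  have hperp : C ⊓ colsIn (fun i => orthogonal (dotProductBilin K K) (U i)) = ⊥ :=
    (forall_lt_srk_iff C (u := d - 1) (by omega)).1 ((lt_minSrk_iff hne).1 (by omega)) _
      (by omega)
  have key := finrank_orthogonal_inf_add traceForm_nondegenerate traceForm_isSymm.isRefl C
    (colsIn U)
  rw [orthogonal_colsIn, hperp, finrank_bot, finrank_colsIn, ← mul_sum, hU, hD,
    finrank_matTuple_const] at key
  have : m * (d - 1) + m * (∑ i, n i - d + 1) = m * ∑ i, n i := by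
    rw [← mul_add]
    congr 1
    omega
  exact Submodule.finrank_eq_zero.1 (by omega)

theorem minSrk_orthogonal (hbot : C ≠ ⊥) (htop : C ≠ ⊤)
    (hC : finrank K C = m * (∑ i, n i - minSrk (C : Set (MatTuple K n fun _ => m)) + 1)) :
    minSrk (traceForm.orthogonal C : Set (MatTuple K n fun _ => m)) =
      ∑ i, n i - minSrk (C : Set (MatTuple K n fun _ => m)) + 2 := by
  have hDbot := orthogonal_eq_bot_iff.not.2 htop
  have hD := finrank_orthogonal_of_finrank_eq hbot hC
  have hd := two_le_minSrk hbot htop hC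
  have hm : 0 < m := Nat.pos_of_ne_zero fun hm =>
    hDbot (Submodule.finrank_eq_zero.1 (hD.trans (by simp [hm])))
  have hsingleton := finrank_le_singleton _ hDbot
  rw [hD] at hsingleton
  have := Nat.le_of_mul_le_mul_left hsingleton hm
  have := minSrk_le_sum ((Submodule.ne_bot_iff _).1 hDbot)
  have := lt_minSrk_orthogonal hbot htop hC
  omega

variable [Fintype K]

theorem isMSRD_bot :
    IsMSRD ((⊥ : Submodule K (MatTuple K n fun _ => m)) : Set (MatTuple K n fun _ => m)) :=
  Or.inl (by simp)

theorem isMSRD_iff_finrank_eq (hbot : C ≠ ⊥) :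
    IsMSRD (C : Set (MatTuple K n fun _ => m)) ↔
      finrank K C = m * (∑ i, n i - minSrk (C : Set (MatTuple K n fun _ => m)) + 1) := by
  have hcard : Nat.card (C : Set (MatTuple K n fun _ => m)) = Fintype.card K ^ finrank K C := by
    rw [← Nat.card_eq_fintype_card, ← Module.natCard_eq_pow_finrank]
    rfl
  have hpos : finrank K C ≠ 0 := Submodule.finrank_eq_zero.not.2 hbot
  rw [IsMSRD, hcard, (Nat.pow_right_injective Fintype.one_lt_card).eq_iff, Nat.pow_eq_one]
  simp only [Fintype.one_lt_card.ne', hpos, or_self, false_or]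

theorem isMSRD_top :
    IsMSRD ((⊤ : Submodule K (MatTuple K n fun _ => m)) : Set (MatTuple K n fun _ => m)) := by
  rcases eq_or_ne (⊤ : Submodule K (MatTuple K n fun _ => m)) ⊥ with h | h
  · exact h ▸ isMSRD_bot
  have hne := (Submodule.ne_bot_iff _).1 h
  have hd := minSrk_pos hne
  have hdN := minSrk_le_sum hne
  refine (isMSRD_iff_finrank_eq h).2 (le_antisymm (finrank_le_singleton ⊤ h) ?_)
  rw [finrank_top, finrank_matTuple_const]
  gcongr
  omega

theorem isMSRD_orthogonal (hC : IsMSRD (C : Set (MatTuple K n fun _ => m))) :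
    IsMSRD (traceForm.orthogonal C : Set (MatTuple K n fun _ => m)) := by
  rcases eq_or_ne C ⊥ with rfl | hbot
  · rw [orthogonal_bot]
    exact isMSRD_top
  rcases eq_or_ne C ⊤ with rfl | htop
  · rw [orthogonal_top_eq_bot traceForm_nondegenerate]
    exact isMSRD_bot
  have hfin := (isMSRD_iff_finrank_eq hbot).1 hC
  have hd := two_le_minSrk hbot htop hfin
  have hdN := minSrk_le_sum ((Submodule.ne_bot_iff C).1 hbot)
  rw [isMSRD_iff_finrank_eq (orthogonal_eq_bot_iff.not.2 htop), minSrk_orthogonal hbot htop hfin,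
    finrank_orthogonal_of_finrank_eq hbot hfin]
  congr 1
  omega

end ConstantWidth

end SumRank

theorem dual_of_MSRD_is_MSRD_general (Fq : Type) [Field Fq] [Fintype Fq]
    (t : ℕ) (n : Fin t → ℕ) (m : ℕ)
    (C : Submodule Fq (∀ i, Matrix (Fin (n i)) (Fin ((fun _ => m) i)) Fq))
    (hC : IsMSRD (C : Set (∀ i, Matrix (Fin (n i)) (Fin ((fun _ => m) i)) Fq))) :
    IsMSRD (dualSet (C : Set (∀ i, Matrix (Fin (n i)) (Fin ((fun _ => m) i)) Fq))) ∧
    (C ≠ ⊥ → C ≠ ⊤ →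
      minSrk (dualSet (C : Set (∀ i, Matrix (Fin (n i)) (Fin ((fun _ => m) i)) Fq)))
        = (∑ i, n i) -
            minSrk (C : Set (∀ i, Matrix (Fin (n i)) (Fin ((fun _ => m) i)) Fq)) + 2) := by
  rw [SumRank.dualSet_eq_orthogonal]
  exact ⟨SumRank.isMSRD_orthogonal hC, fun hbot htop =>
    SumRank.minSrk_orthogonal hbot htop ((SumRank.isMSRD_iff_finrank_eq hbot).1 hC)⟩

/-- when all blocks have `m` columns, the dual of a linear MSRD code is
MSRD; moreover, if the code is non-trivial, `srk(C^⊥) = N - srk(C) + 2`. -/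
theorem dual_of_MSRD_is_MSRD (Fq : Type) [Field Fq] [Fintype Fq]
    (t : ℕ) (n : Fin t → ℕ) (m : ℕ) (hnm : ∀ i, 1 ≤ n i ∧ n i ≤ m)
    (C : Submodule Fq (∀ i, Matrix (Fin (n i)) (Fin ((fun _ => m) i)) Fq))
    (hC : IsMSRD (C : Set (∀ i, Matrix (Fin (n i)) (Fin ((fun _ => m) i)) Fq))) :
    IsMSRD (dualSet (C : Set (∀ i, Matrix (Fin (n i)) (Fin ((fun _ => m) i)) Fq))) ∧
    (C ≠ ⊥ → C ≠ ⊤ →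
      minSrk (dualSet (C : Set (∀ i, Matrix (Fin (n i)) (Fin ((fun _ => m) i)) Fq)))
        = (∑ i, n i) -
            minSrk (C : Set (∀ i, Matrix (Fin (n i)) (Fin ((fun _ => m) i)) Fq)) + 2) :=
  dual_of_MSRD_is_MSRD_general Fq t n m C hC
end

section
/- Over any finite field F_q, consider Π = ⊕_{i=1}^t F_q^{n_i × m_i} with m_1 ≥ ... ≥ m_t and n_i ≤ m_i. Let C_i ≤ F_q^{n_i × m_i} be MRD codes of rank distance n_i (so dim C_i = m_i), with basis A_{i,1},...,A_{i,m_i}. Then the code C = span{(A_{1,j},...,A_{t,j}) : 1 ≤ j ≤ m_t} has dimension m_t, every nonzero codeword has sum-rank weight N = Σ n_i, and C is MSRD of sum-rank distance N. -/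
/-! Since the `i`-th blocks of the generating tuples are linearly independent, a nonzero
codeword cannot vanish in any block; each block lies in the MRD code `C_i`, so it has full
rank `n_i`, and the sum-rank is `N`. The generators are independent already in one block,
so the code has dimension `m_t`. -/

open Matrix Finset

section SpanCoordinates

variable {R ι κ : Type*} {M : κ → Type*}

theorem apply_mem_span_range_apply [Semiring R] [∀ i, AddCommMonoid (M i)] [∀ i, Module R (M i)]
    {v : ι → ∀ i, M i} {X : ∀ i, M i}
    (hX : X ∈ Submodule.span R (Set.range v)) (i : κ) :
    X i ∈ Submodule.span R (Set.range fun j => v j i) := by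
  have h := Submodule.mem_map_of_mem (f := LinearMap.proj (R := R) (φ := M) i) hX
  rwa [Submodule.map_span, ← Set.range_comp] at h

theorem apply_ne_zero_of_mem_span_range [Ring R] [∀ i, AddCommGroup (M i)] [∀ i, Module R (M i)]
    [Fintype ι] {v : ι → ∀ i, M i} {i : κ}
    (hv : LinearIndependent R fun j => v j i) {X : ∀ i, M i}
    (hX : X ∈ Submodule.span R (Set.range v)) (hX0 : X ≠ 0) : X i ≠ 0 := by
  obtain ⟨c, rfl⟩ := (Submodule.mem_span_range_iff_exists_fun R).mp hX
  intro hXi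
  have hc : c = 0 := funext <| Fintype.linearIndependent_iff.mp hv c <| by
    simpa only [Finset.sum_apply, Pi.smul_apply] using hXi
  simp [hc] at hX0

end SpanCoordinates

theorem srk_eq_sum_of_mem_span {Fq ι : Type*} [Field Fq] [Fintype ι] {t : ℕ}
    {n m : Fin t → ℕ} {C : ∀ i, Submodule Fq (Matrix (Fin (n i)) (Fin (m i)) Fq)}
    (hC : ∀ i, ∀ X ∈ C i, X ≠ 0 → X.rank = n i)
    {v : ι → ∀ i, Matrix (Fin (n i)) (Fin (m i)) Fq}
    (hv : ∀ i, LinearIndependent Fq fun j => v j i) (hvC : ∀ i j, v j i ∈ C i)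
    {X : ∀ i, Matrix (Fin (n i)) (Fin (m i)) Fq}
    (hX : X ∈ Submodule.span Fq (Set.range v)) (hX0 : X ≠ 0) :
    srk X = ∑ i, n i := by
  refine Finset.sum_congr rfl fun i _ =>
    hC i (X i) ?_ (apply_ne_zero_of_mem_span_range (hv i) hX hX0)
  exact Submodule.span_le.mpr (Set.range_subset_iff.mpr (hvC i)) (apply_mem_span_range_apply hX i)

theorem full_distance_MSRD_construction_general (Fq : Type) [Field Fq]
    (t : ℕ) (n m : Fin (t + 1) → ℕ)
    (hnm : ∀ i, 1 ≤ n i ∧ n i ≤ m i)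
    (hmono : ∀ i j : Fin (t + 1), i ≤ j → m j ≤ m i)
    (Ci : ∀ i, Submodule Fq (Matrix (Fin (n i)) (Fin (m i)) Fq))
    (hMRD : ∀ i, ∀ X ∈ Ci i, X ≠ 0 → (X : Matrix (Fin (n i)) (Fin (m i)) Fq).rank = n i)
    (A : ∀ i, Fin (m i) → Matrix (Fin (n i)) (Fin (m i)) Fq)
    (hindep : ∀ i, LinearIndependent Fq (A i))
    (hspan : ∀ i, Submodule.span Fq (Set.range (A i)) = Ci i) :
    Module.finrank Fq (Submodule.span Fq (Set.range
        (fun (j : Fin (m (Fin.last t))) (i : Fin (t + 1)) =>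
          A i (Fin.castLE (hmono i (Fin.last t) (Fin.le_last i)) j))))
      = m (Fin.last t) ∧
    (∀ X ∈ Submodule.span Fq (Set.range
        (fun (j : Fin (m (Fin.last t))) (i : Fin (t + 1)) =>
          A i (Fin.castLE (hmono i (Fin.last t) (Fin.le_last i)) j))),
      X ≠ 0 → srk X = ∑ i, n i) ∧
    IsLeast {r | ∃ X ∈ Submodule.span Fq (Set.range
        (fun (j : Fin (m (Fin.last t))) (i : Fin (t + 1)) =>
          A i (Fin.castLE (hmono i (Fin.last t) (Fin.le_last i)) j))),
      X ≠ 0 ∧ srk X = r} (∑ i, n i) := by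
  set v : Fin (m (Fin.last t)) → ∀ i, Matrix (Fin (n i)) (Fin (m i)) Fq :=
    fun j i => A i (Fin.castLE (hmono i (Fin.last t) (Fin.le_last i)) j)
  have hcoord : ∀ i, LinearIndependent Fq fun j => v j i := fun i =>
    (hindep i).comp _ (Fin.castLE_injective _)
  have hcoordC : ∀ i j, v j i ∈ Ci i := fun i j =>
    hspan i ▸ Submodule.subset_span (Set.mem_range_self _)
  have hv : LinearIndependent Fq v := (hcoord 0).of_comp (LinearMap.proj 0)
  have hweight := fun X => srk_eq_sum_of_mem_span (X := X) hMRD hcoord hcoordC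
  have hm : 0 < m (Fin.last t) := (hnm (Fin.last t)).1.trans (hnm (Fin.last t)).2
  have hv0 : v ⟨0, hm⟩ ∈ Submodule.span Fq (Set.range v) :=
    Submodule.subset_span (Set.mem_range_self _)
  refine ⟨by rw [finrank_span_eq_card hv, Fintype.card_fin], hweight, ?_, ?_⟩
  · exact ⟨v ⟨0, hm⟩, hv0, hv.ne_zero _, hweight _ hv0 (hv.ne_zero _)⟩
  · rintro r ⟨X, hX, hX0, rfl⟩
    exact (hweight X hX hX0).ge

/-- Construction of MSRD codes of sum-rank distance `N`. Given for each
block an MRD code `C_i ≤ Fq^{n_i × m_i}` of rank distance `n_i` (so every nonzero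
codeword has full rank and `dim C_i = m_i`) with basis `A_{i,1}, ..., A_{i,m_i}`, the
span of the `m_t` tuples `(A_{1,j}, ..., A_{t,j})` has dimension `m_t`, every nonzero
codeword has sum-rank weight `N = Σ n_i`, and it is MSRD with minimum distance `N`. -/
theorem full_distance_MSRD_construction (Fq : Type) [Field Fq] [Fintype Fq]
    (t : ℕ) (n m : Fin (t + 1) → ℕ)
    (hnm : ∀ i, 1 ≤ n i ∧ n i ≤ m i)
    (hmono : ∀ i j : Fin (t + 1), i ≤ j → m j ≤ m i)
    (Ci : ∀ i, Submodule Fq (Matrix (Fin (n i)) (Fin (m i)) Fq))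
    (hMRD : ∀ i, ∀ X ∈ Ci i, X ≠ 0 → (X : Matrix (Fin (n i)) (Fin (m i)) Fq).rank = n i)
    (A : ∀ i, Fin (m i) → Matrix (Fin (n i)) (Fin (m i)) Fq)
    (hindep : ∀ i, LinearIndependent Fq (A i))
    (hspan : ∀ i, Submodule.span Fq (Set.range (A i)) = Ci i) :
    Module.finrank Fq (Submodule.span Fq (Set.range
        (fun (j : Fin (m (Fin.last t))) (i : Fin (t + 1)) =>
          A i (Fin.castLE (hmono i (Fin.last t) (Fin.le_last i)) j))))
      = m (Fin.last t) ∧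
    (∀ X ∈ Submodule.span Fq (Set.range
        (fun (j : Fin (m (Fin.last t))) (i : Fin (t + 1)) =>
          A i (Fin.castLE (hmono i (Fin.last t) (Fin.le_last i)) j))),
      X ≠ 0 → srk X = ∑ i, n i) ∧
    IsLeast {r | ∃ X ∈ Submodule.span Fq (Set.range
        (fun (j : Fin (m (Fin.last t))) (i : Fin (t + 1)) =>
          A i (Fin.castLE (hmono i (Fin.last t) (Fin.le_last i)) j))),
      X ≠ 0 ∧ srk X = r} (∑ i, n i) :=
  full_distance_MSRD_construction_general Fq t n m hnm hmono Ci hMRD A hindep hspan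
end

section
/- Lifting construction: let δ_i ∈ [n_i], let C_i be [n_i × m_i; δ_i]_q MRD codes, let 1 ≤ h ≤ min_i m_i(n_i − δ_i + 1), let H ≤ F_{q^h}^t be a nonzero F_q-linear code of minimum Hamming distance Δ, and let φ_i : F_{q^h} → C_i be F_q-linear injections. Then C := {(φ_1(α_1),...,φ_t(α_t)) : (α_1,...,α_t) ∈ H} ≤ Π satisfies dim_{F_q}(C) = dim_{F_q}(H) and srk(C) ≥ min{Σ_{i∈I} δ_i : I ⊆ [t], |I| = Δ}. -/
/-!
The lift `α ↦ (φ_i(α_i))_i` is injective coordinatewise, so it preserves dimension. A nonzero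
`α ∈ H` has at least `Δ` nonzero coordinates, and each of them is sent to a nonzero codeword of
the MRD code `C_i`, hence to a matrix of rank at least `δ_i`.
-/

open Matrix Finset

lemma sum_le_srk {Fq : Type*} [Field Fq] {t : ℕ} {n m : Fin t → ℕ}
    {X : ∀ i, Matrix (Fin (n i)) (Fin (m i)) Fq} {δ : Fin t → ℕ} (I : Finset (Fin t))
    (hX : ∀ i ∈ I, δ i ≤ (X i).rank) : ∑ i ∈ I, δ i ≤ srk X :=
  calc ∑ i ∈ I, δ i ≤ ∑ i ∈ I, (X i).rank := sum_le_sum hX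
    _ ≤ ∑ i, (X i).rank := sum_le_sum_of_subset I.subset_univ

lemma sInf_sum_card_eq_le_sum {ι : Type*} {δ : ι → ℕ} {Δ : ℕ} {s : Finset ι}
    (hs : Δ ≤ #s) : sInf {x | ∃ I : Finset ι, #I = Δ ∧ x = ∑ i ∈ I, δ i} ≤ ∑ i ∈ s, δ i := by
  obtain ⟨I, hIs, hI⟩ := exists_subset_card_eq hs
  exact (Nat.sInf_le (Set.mem_ofPred.2 ⟨I, hI, rfl⟩)).trans (sum_le_sum_of_subset hIs)

lemma le_hammingNorm_of_isLeast_hammingDist {R ι M : Type*} [Semiring R] [Fintype ι]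
    [AddCommMonoid M] [Module R M] [DecidableEq M] {H : Submodule R (ι → M)} {Δ : ℕ}
    (hΔ : IsLeast {e | ∃ α ∈ H, ∃ β ∈ H, α ≠ β ∧ hammingDist α β = e} Δ)
    {α : ι → M} (hα : α ∈ H) (hα0 : α ≠ 0) : Δ ≤ hammingNorm α := by
  simpa only [hammingDist_zero_right] using
    mem_lowerBounds.1 hΔ.2 _ ⟨α, hα, 0, H.zero_mem, hα0, rfl⟩

theorem lifting_construction_general (Fq : Type) [Field Fq]
    (t : ℕ) (n m : Fin t → ℕ)
    (δ : Fin t → ℕ)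
    (Ci : ∀ i, Submodule Fq (Matrix (Fin (n i)) (Fin (m i)) Fq))
    (hMRDdist : ∀ i, ∀ X ∈ Ci i, X ≠ 0 →
      δ i ≤ (X : Matrix (Fin (n i)) (Fin (m i)) Fq).rank)
    (K : Type) [Field K] [Algebra Fq K] [DecidableEq K]
    (H : Submodule Fq (Fin t → K)) (Δ : ℕ)
    (hΔ : IsLeast {e | ∃ α ∈ H, ∃ β ∈ H, α ≠ β ∧ hammingDist α β = e} Δ)
    (φ : ∀ i, K →ₗ[Fq] Matrix (Fin (n i)) (Fin (m i)) Fq)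
    (hφinj : ∀ i, Function.Injective (φ i))
    (hφrange : ∀ i, ∀ a : K, φ i a ∈ Ci i) :
    Module.finrank Fq
        (H.map (LinearMap.pi fun i => (φ i).comp (LinearMap.proj i)))
      = Module.finrank Fq H ∧
    ∀ X ∈ H.map (LinearMap.pi fun i => (φ i).comp (LinearMap.proj i)), X ≠ 0 →
      sInf {s | ∃ I : Finset (Fin t), I.card = Δ ∧ s = ∑ i ∈ I, δ i} ≤ srk X := by
  change Module.finrank Fq (H.map (LinearMap.piMap φ)) = _ ∧ ∀ X ∈ H.map (LinearMap.piMap φ), _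
  refine ⟨(Submodule.equivMapOfInjective _ (Function.Injective.piMap hφinj) H).finrank_eq.symm,
    ?_⟩
  rintro _ ⟨α, hα, rfl⟩ hX0
  have hα0 : α ≠ 0 := by rintro rfl; exact hX0 (map_zero _)
  have hrank (i : Fin t) (hi : α i ≠ 0) : δ i ≤ (φ i (α i)).rank :=
    hMRDdist i _ (hφrange i _) ((map_ne_zero_iff _ (hφinj i)).2 hi)
  calc _ ≤ ∑ i ∈ {i | α i ≠ 0}, δ i :=
        sInf_sum_card_eq_le_sum (le_hammingNorm_of_isLeast_hammingDist hΔ hα hα0)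
    _ ≤ srk (LinearMap.piMap φ α) := sum_le_srk _ fun i hi => hrank i (by simpa using hi)

/-- the lifting construction. Given `[n_i × m_i; δ_i]` MRD codes `C_i`,
a field extension `K = F_{q^h}` with `h ≤ min_i m_i (n_i - δ_i + 1)`, a nonzero
`Fq`-linear code `H ≤ K^t` of minimum Hamming distance `Δ`, and `Fq`-linear injections
`φ_i : K → C_i`, the lifted code `C = {(φ_1(α_1), ..., φ_t(α_t)) : α ∈ H}` satisfies
`dim_{Fq} C = dim_{Fq} H` and `srk(C) ≥ min{Σ_{i ∈ I} δ_i : I ⊆ [t], |I| = Δ}`. -/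
theorem lifting_construction (Fq : Type) [Field Fq] [Fintype Fq]
    (t : ℕ) (n m : Fin t → ℕ) (hnm : ∀ i, 1 ≤ n i ∧ n i ≤ m i)
    (δ : Fin t → ℕ) (hδ : ∀ i, 1 ≤ δ i ∧ δ i ≤ n i)
    (Ci : ∀ i, Submodule Fq (Matrix (Fin (n i)) (Fin (m i)) Fq))
    (hMRDdim : ∀ i, Module.finrank Fq (Ci i) = m i * (n i - δ i + 1))
    (hMRDdist : ∀ i, ∀ X ∈ Ci i, X ≠ 0 →
      δ i ≤ (X : Matrix (Fin (n i)) (Fin (m i)) Fq).rank)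
    (K : Type) [Field K] [Algebra Fq K] [DecidableEq K]
    (h : ℕ) (hh1 : 1 ≤ h) (hK : Module.finrank Fq K = h)
    (hhmin : ∀ i, h ≤ m i * (n i - δ i + 1))
    (H : Submodule Fq (Fin t → K)) (hH : H ≠ ⊥) (Δ : ℕ)
    (hΔ : IsLeast {e | ∃ α ∈ H, ∃ β ∈ H, α ≠ β ∧ hammingDist α β = e} Δ)
    (φ : ∀ i, K →ₗ[Fq] Matrix (Fin (n i)) (Fin (m i)) Fq)
    (hφinj : ∀ i, Function.Injective (φ i))
    (hφrange : ∀ i, ∀ a : K, φ i a ∈ Ci i) :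
    Module.finrank Fq
        (H.map (LinearMap.pi fun i => (φ i).comp (LinearMap.proj i)))
      = Module.finrank Fq H ∧
    ∀ X ∈ H.map (LinearMap.pi fun i => (φ i).comp (LinearMap.proj i)), X ≠ 0 →
      sInf {s | ∃ I : Finset (Fin t), I.card = Δ ∧ s = ∑ i ∈ I, δ i} ≤ srk X :=
  lifting_construction_general Fq t n m δ Ci hMRDdist K H Δ hΔ φ hφinj hφrange
end
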